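/- arXiv:2007.02729 — 7 statements merged into one kernel-verified Lean document; each statement's English description precedes it below -/
import Mathlib

section
/- Any simple path is uniquely determined by its starting point and endpoint: if G' ∈ Cat_{n,d}(k) with 1 ≤ k ≤ 𝔪 has a non-empty s-neighborhood, then any simple graph G in the s-neighborhood of G' uniquely determines the collection of k simple switching operations generating the simple path from G' to G. -/
open Finset

/-- A bipartite multigraph on `[n] ⊔ [m]` encoded by its adjacency (multiplicity) matrix. -/
def IsReg (n d : ℕ) (A : Fin n → Fin n → ℕ) : Prop :=
  (∀ i, ∑ j, A i j = d) ∧ (∀ j, ∑ i, A i j = d)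

/-- A multigraph is simple if all multiplicities are at most one. -/
def IsSimpleG {n m : ℕ} (A : Fin n → Fin m → ℕ) : Prop := ∀ i j, A i j ≤ 1

/-- The simple switching `⟨i,i',j,j'⟩`: replace the edges `(i,j)` and `(i',j')` by
`(i,j')` and `(i',j)`. -/
def switchM {n m : ℕ} (A : Fin n → Fin m → ℕ) (i i' : Fin n) (j j' : Fin m) :
    Fin n → Fin m → ℕ :=
  fun a b =>
    if a = i ∧ b = j then A a b - 1
    else if a = i' ∧ b = j' then A a b - 1
    else if a = i ∧ b = j' then A a b + 1
    else if a = i' ∧ b = j then A a b + 1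
    else A a b

/-- Two multigraphs are adjacent if one is obtained from the other by a simple switching
operated on two non-incident edges. -/
def AdjacentM {n : ℕ} (A B : Fin n → Fin n → ℕ) : Prop :=
  ∃ i i' j j', i ≠ i' ∧ j ≠ j' ∧ 0 < A i j ∧ 0 < A i' j' ∧ B = switchM A i i' j j'

/-- `Cat_{n,d}(k)`: `d`-regular bipartite multigraphs with exactly `k` multiplicity-2 edges,
no two of them incident, and no multiplicities `≥ 3`. -/
def InCat (n d k : ℕ) (A : Fin n → Fin n → ℕ) : Prop :=
  IsReg n d A ∧ (∀ i j, A i j ≤ 2) ∧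
    (Finset.univ.filter fun p : Fin n × Fin n => A p.1 p.2 = 2).card = k ∧
    (∀ i j j', A i j = 2 → A i j' = 2 → j = j') ∧
    (∀ i i' j, A i j = 2 → A i' j = 2 → i = i')

/-- The set of multiedges (multiplicity-2 edges) of a multigraph. -/
def MEs {n : ℕ} (A : Fin n → Fin n → ℕ) : Finset (Fin n × Fin n) :=
  Finset.univ.filter fun p => A p.1 p.2 = 2

/-- The data of a simple path starting at a multigraph `A ∈ Cat_{n,d}(k)`: to each
multiedge `e = (i_s, j_s)` of `A` it assigns the auxiliary edge `f e = (i'_s, j'_s)` used by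
the corresponding simple switching `⟨i_s, i'_s, j_s, j'_s⟩`.  The auxiliary left (resp. right)
vertices are pairwise distinct, avoid all multiedge left (resp. right) vertices, and the
switching creates no multiple edges. -/
def SimplePathData {n : ℕ} (A : Fin n → Fin n → ℕ)
    (f : Fin n × Fin n → Fin n × Fin n) : Prop :=
  (∀ e ∈ MEs A, 0 < A (f e).1 (f e).2 ∧ A (f e).1 e.2 = 0 ∧ A e.1 (f e).2 = 0 ∧
    ∀ e' ∈ MEs A, (f e).1 ≠ e'.1 ∧ (f e).2 ≠ e'.2) ∧
  ∀ e ∈ MEs A, ∀ e' ∈ MEs A, e ≠ e' → (f e).1 ≠ (f e').1 ∧ (f e).2 ≠ (f e').2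

/-- The endpoint of the simple path with data `f` starting at `A`: each multiedge
`(i_s,j_s)` loses one parallel edge, the auxiliary edge `(i'_s,j'_s)` is removed, and the
edges `(i_s,j'_s)` and `(i'_s,j_s)` are added. -/
def endpointM {n : ℕ} (A : Fin n → Fin n → ℕ) (f : Fin n × Fin n → Fin n × Fin n) :
    Fin n → Fin n → ℕ :=
  fun a b =>
    A a b + ((MEs A).filter fun e => (a = e.1 ∧ b = (f e).2) ∨ (a = (f e).1 ∧ b = e.2)).card
      - ((MEs A).filter fun e => (a = e.1 ∧ b = e.2) ∨ (a = (f e).1 ∧ b = (f e).2)).card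

/-- The `s`-neighborhood of a multigraph: all endpoints of simple paths starting at it. -/
def SN {n : ℕ} (A : Fin n → Fin n → ℕ) : Set (Fin n → Fin n → ℕ) :=
  {B | ∃ f, SimplePathData A f ∧ B = endpointM A f}

/-- The anti-expansion measure `Z(G)` of a simple graph. -/
def Zae {n : ℕ} (A : Fin n → Fin n → ℕ) : ℕ :=
  (Finset.univ.filter fun p : Fin n × Fin n =>
    0 < A p.1 p.2 ∧ ∃ k, k ≠ p.1 ∧ 0 < A k p.2 ∧
      2 ≤ (Finset.univ.filter fun j => 0 < A p.1 j ∧ 0 < A k j).card).card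

lemma endpoint_row {n : ℕ} (A : Fin n → Fin n → ℕ)
    (hu : ∀ i j j', A i j = 2 → A i j' = 2 → j = j')
    (f : Fin n × Fin n → Fin n × Fin n) (hf : SimplePathData A f)
    {e : Fin n × Fin n} (he : e ∈ MEs A) (b : Fin n) :
    endpointM A f e.1 b =
      if b = (f e).2 then 1 else if b = e.2 then 1 else A e.1 b := by
  have hAe : A e.1 e.2 = 2 := by simpa [MEs] using he
  obtain ⟨hpos, hz1, hz2, havoid⟩ := hf.1 e he
  have hne2 : (f e).2 ≠ e.2 := (havoid e he).2
  have hP : ((MEs A).filter fun e' => (e.1 = e'.1 ∧ b = (f e').2) ∨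
      (e.1 = (f e').1 ∧ b = e'.2)) = if b = (f e).2 then {e} else ∅ := by
    ext e'
    simp only [Finset.mem_filter]
    constructor
    · rintro ⟨he', h | h⟩
      · have hAe' : A e'.1 e'.2 = 2 := by simpa [MEs] using he'
        have : e.2 = e'.2 := hu e.1 e.2 e'.2 hAe (by rw [h.1]; exact hAe')
        have hee : e' = e := Prod.ext h.1.symm this.symm
        subst hee
        simp [h.2]
      · exact absurd h.1.symm ((hf.1 e' he').2.2.2 e he).1
    · intro h
      split_ifs at h with hb
      · simp only [Finset.mem_singleton] at h
        subst h; subst hb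
        exact ⟨he, Or.inl ⟨rfl, rfl⟩⟩
      · simp at h
  have hM : ((MEs A).filter fun e' => (e.1 = e'.1 ∧ b = e'.2) ∨
      (e.1 = (f e').1 ∧ b = (f e').2)) = if b = e.2 then {e} else ∅ := by
    ext e'
    simp only [Finset.mem_filter]
    constructor
    · rintro ⟨he', h | h⟩
      · have hAe' : A e'.1 e'.2 = 2 := by simpa [MEs] using he'
        have : e.2 = e'.2 := hu e.1 e.2 e'.2 hAe (by rw [h.1]; exact hAe')
        have hee : e' = e := Prod.ext h.1.symm this.symm
        subst hee
        simp [h.2]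
      · exact absurd h.1.symm ((hf.1 e' he').2.2.2 e he).1
    · intro h
      split_ifs at h with hb
      · simp only [Finset.mem_singleton] at h
        subst h; subst hb
        exact ⟨he, Or.inl ⟨rfl, rfl⟩⟩
      · simp at h
  show A e.1 b + _ - _ = _
  rw [hP, hM]
  split_ifs with h1 h2 h3
  · exact absurd (h1 ▸ h2 : (f e).2 = e.2) hne2
  · subst h1
    simp [hz2]
  · subst h3
    simp [hAe]
  · simp

lemma endpoint_col {n : ℕ} (A : Fin n → Fin n → ℕ)
    (hu : ∀ i i' j, A i j = 2 → A i' j = 2 → i = i')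
    (f : Fin n × Fin n → Fin n × Fin n) (hf : SimplePathData A f)
    {e : Fin n × Fin n} (he : e ∈ MEs A) (a : Fin n) :
    endpointM A f a e.2 =
      if a = (f e).1 then 1 else if a = e.1 then 1 else A a e.2 := by
  have hAe : A e.1 e.2 = 2 := by simpa [MEs] using he
  obtain ⟨hpos, hz1, hz2, havoid⟩ := hf.1 e he
  have hne1 : (f e).1 ≠ e.1 := (havoid e he).1
  have hP : ((MEs A).filter fun e' => (a = e'.1 ∧ e.2 = (f e').2) ∨
      (a = (f e').1 ∧ e.2 = e'.2)) = if a = (f e).1 then {e} else ∅ := by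
    ext e'
    simp only [Finset.mem_filter]
    constructor
    · rintro ⟨he', h | h⟩
      · exact absurd h.2.symm ((hf.1 e' he').2.2.2 e he).2
      · have hAe' : A e'.1 e'.2 = 2 := by simpa [MEs] using he'
        have : e.1 = e'.1 := hu e.1 e'.1 e.2 hAe (by rw [h.2]; exact hAe')
        have hee : e' = e := Prod.ext this.symm h.2.symm
        subst hee
        simp [h.1]
    · intro h
      split_ifs at h with ha
      · simp only [Finset.mem_singleton] at h
        subst h; subst ha
        exact ⟨he, Or.inr ⟨rfl, rfl⟩⟩
      · simp at h
  have hM : ((MEs A).filter fun e' => (a = e'.1 ∧ e.2 = e'.2) ∨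
      (a = (f e').1 ∧ e.2 = (f e').2)) = if a = e.1 then {e} else ∅ := by
    ext e'
    simp only [Finset.mem_filter]
    constructor
    · rintro ⟨he', h | h⟩
      · have hAe' : A e'.1 e'.2 = 2 := by simpa [MEs] using he'
        have : e.1 = e'.1 := hu e.1 e'.1 e.2 hAe (by rw [h.2]; exact hAe')
        have hee : e' = e := Prod.ext this.symm h.2.symm
        subst hee
        simp [h.1]
      · exact absurd h.2.symm ((hf.1 e' he').2.2.2 e he).2
    · intro h
      split_ifs at h with ha
      · simp only [Finset.mem_singleton] at h
        subst h; subst ha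
        exact ⟨he, Or.inl ⟨rfl, rfl⟩⟩
      · simp at h
  show A a e.2 + _ - _ = _
  rw [hP, hM]
  split_ifs with h1 h2 h3
  · exact absurd (h1 ▸ h2 : (f e).1 = e.1) hne1
  · subst h1
    simp [hz1]
  · subst h3
    simp [hAe]
  · simp

/-- Uniqueness of a simple path: for `G' ∈ Cat_{n,d}(k)` with
`1 ≤ k ≤ 𝔪 = d²⌊log n⌋` and `G ∈ SN(G')`, the graph `G` uniquely determines the collection of
`k` simple switchings generating the simple path leading from `G'` to `G`. -/
theorem stmt1 (n d k : ℕ) (hk : 1 ≤ k) (hm : k ≤ d ^ 2 * ⌊Real.log (n : ℝ)⌋₊)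
    (A B : Fin n → Fin n → ℕ) (hA : InCat n d k A) (hB : B ∈ SN A)
    (f g : Fin n × Fin n → Fin n × Fin n)
    (hf : SimplePathData A f) (hg : SimplePathData A g)
    (hfB : endpointM A f = B) (hgB : endpointM A g = B) :
    ∀ e ∈ MEs A, f e = g e := by
  intro e he
  have hu2 := hA.2.2.2.1
  have hu1 := hA.2.2.2.2
  have hEq : endpointM A f = endpointM A g := hfB.trans hgB.symm
  obtain ⟨_, hfz1, hfz2, hfavoid⟩ := hf.1 e he
  obtain ⟨_, hgz1, hgz2, hgavoid⟩ := hg.1 e he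
  have h2 : (f e).2 = (g e).2 := by
    by_contra hne
    have h1 : endpointM A f e.1 (f e).2 = 1 := by
      rw [endpoint_row A hu2 f hf he]; simp
    have h0 : endpointM A g e.1 (f e).2 = A e.1 (f e).2 := by
      rw [endpoint_row A hu2 g hg he, if_neg hne, if_neg (hfavoid e he).2]
    rw [hEq, h0, hfz2] at h1
    exact absurd h1 one_ne_zero.symm
  have h1 : (f e).1 = (g e).1 := by
    by_contra hne
    have ha : endpointM A f (f e).1 e.2 = 1 := by
      rw [endpoint_col A hu1 f hf he]; simp
    have h0 : endpointM A g (f e).1 e.2 = A (f e).1 e.2 := by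
      rw [endpoint_col A hu1 g hg he, if_neg hne, if_neg (hfavoid e he).1]
    rw [hEq, h0, hfz1] at ha
    exact absurd ha one_ne_zero.symm
  exact Prod.ext h1 h2
end

section
/- If G and G' are adjacent simple d-regular bipartite graphs (i.e., related by one simple switching), then the anti-expansion measure satisfies Z(G) ≤ Z(G') + 2d². -/
open Finset

/-!
Only the rows `i, i'` change under the switching `⟨i,i',j,j'⟩`, and whether an edge `(a,c)`
is counted by `Z` depends only on the rows of `a` and of the witness `k`, both of which are
neighbours of `c`. So every edge counted in `Z(G)` but not in `Z(G')` lies in a column adjacent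
to `i` or `i'`; there are at most `2d` such columns, each carrying at most `d` edges.
-/

theorem Finset.card_filter_pos_le_sum {ι : Type*} (s : Finset ι) (f : ι → ℕ) :
    #(s.filter fun x => 0 < f x) ≤ ∑ x ∈ s, f x :=
  calc #(s.filter fun x => 0 < f x)
      ≤ ∑ x ∈ s.filter (fun x => 0 < f x), f x := by
        rw [card_eq_sum_ones]; exact sum_le_sum fun x hx => (mem_filter.1 hx).2
    _ ≤ ∑ x ∈ s, f x := sum_le_sum_of_subset (filter_subset _ s)

theorem switchM_apply_of_ne {n m : ℕ} (A : Fin n → Fin m → ℕ) {i i' a : Fin n} (j j' : Fin m)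
    (hi : a ≠ i) (hi' : a ≠ i') : switchM A i i' j j' a = A a := by
  ext b
  simp [switchM, hi, hi']

section AntiExpansion

variable {n m : ℕ}

theorem card_filter_pos_or_pos_le {d : ℕ} {A : Fin n → Fin m → ℕ}
    (hrow : ∀ a, ∑ c, A a c ≤ d) (i i' : Fin n) :
    #(univ.filter fun c => 0 < A i c ∨ 0 < A i' c) ≤ 2 * d :=
  calc #(univ.filter fun c => 0 < A i c ∨ 0 < A i' c)
      ≤ #(univ.filter fun c => 0 < A i c) + #(univ.filter fun c => 0 < A i' c) := by
        rw [filter_or]; exact card_union_le _ _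
    _ ≤ d + d := add_le_add ((card_filter_pos_le_sum _ _).trans (hrow i))
        ((card_filter_pos_le_sum _ _).trans (hrow i'))
    _ = 2 * d := (two_mul d).symm

def zaeEdges (A : Fin n → Fin m → ℕ) : Finset (Fin n × Fin m) :=
  univ.filter fun p =>
    0 < A p.1 p.2 ∧ ∃ k, k ≠ p.1 ∧ 0 < A k p.2 ∧
      2 ≤ #(univ.filter fun j => 0 < A p.1 j ∧ 0 < A k j)

theorem zae_eq_card_zaeEdges (A : Fin n → Fin n → ℕ) : Zae A = #(zaeEdges A) := rfl

def edgesInColumns (A : Fin n → Fin m → ℕ) (S : Finset (Fin m)) : Finset (Fin n × Fin m) :=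
  univ.filter fun p => 0 < A p.1 p.2 ∧ p.2 ∈ S

theorem card_edgesInColumns_le (A : Fin n → Fin m → ℕ) (S : Finset (Fin m)) {d : ℕ}
    (hcol : ∀ c ∈ S, ∑ a, A a c ≤ d) : #(edgesInColumns A S) ≤ #S * d :=
  calc #(edgesInColumns A S)
      = #((univ ×ˢ S).filter fun p => 0 < A p.1 p.2) := by
        congr 1; ext p; simp [edgesInColumns, and_comm]
    _ ≤ ∑ p ∈ univ ×ˢ S, A p.1 p.2 := card_filter_pos_le_sum _ _
    _ = ∑ c ∈ S, ∑ a, A a c := sum_product_right _ _ _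
    _ ≤ ∑ _c ∈ S, d := sum_le_sum hcol
    _ = #S * d := by rw [sum_const, smul_eq_mul]

theorem mem_zaeEdges_of_rows_eq {A B : Fin n → Fin m → ℕ} {i i' : Fin n}
    (hrow : ∀ a, a ≠ i → a ≠ i' → B a = A a) {p : Fin n × Fin m} (hp : p ∈ zaeEdges A)
    (hi : A i p.2 = 0) (hi' : A i' p.2 = 0) : p ∈ zaeEdges B := by
  have hrow_of_pos : ∀ a, 0 < A a p.2 → B a = A a := fun a ha =>
    hrow a (by rintro rfl; omega) (by rintro rfl; omega)
  simp only [zaeEdges, mem_filter, mem_univ, true_and] at hp ⊢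
  obtain ⟨hpos, k, hk, hkpos, hcommon⟩ := hp
  refine ⟨by rwa [hrow_of_pos _ hpos], k, hk, ?_⟩
  rw [hrow_of_pos _ hpos, hrow_of_pos k hkpos]
  exact ⟨hkpos, hcommon⟩

theorem card_zaeEdges_le_of_rows_eq {A B : Fin n → Fin m → ℕ} {i i' : Fin n}
    (hrow : ∀ a, a ≠ i → a ≠ i' → B a = A a) :
    #(zaeEdges A) ≤
      #(zaeEdges B) + #(edgesInColumns A (univ.filter fun c => 0 < A i c ∨ 0 < A i' c)) := by
  refine (card_le_card fun p hp => ?_).trans (card_union_le _ _)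
  by_cases hcol : 0 < A i p.2 ∨ 0 < A i' p.2
  · refine mem_union_right _ ?_
    simp only [edgesInColumns, mem_filter, mem_univ, true_and]
    exact ⟨(mem_filter.1 hp).2.1, hcol⟩
  · rw [not_or, not_lt, not_lt] at hcol
    exact mem_union_left _ (mem_zaeEdges_of_rows_eq hrow hp (by omega) (by omega))

end AntiExpansion

theorem stmt3_general (n d : ℕ) (A B : Fin n → Fin n → ℕ)
    (hAreg : IsReg n d A)
    (hadj : AdjacentM A B) :
    Zae A ≤ Zae B + 2 * d ^ 2 := by
  obtain ⟨i, i', j, j', -, -, -, -, rfl⟩ := hadj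
  calc Zae A
      ≤ Zae (switchM A i i' j j') +
          #(edgesInColumns A (univ.filter fun c => 0 < A i c ∨ 0 < A i' c)) := by
        rw [zae_eq_card_zaeEdges, zae_eq_card_zaeEdges]
        exact card_zaeEdges_le_of_rows_eq fun a hi hi' => switchM_apply_of_ne A j j' hi hi'
    _ ≤ Zae (switchM A i i' j j') + 2 * d * d := by
        gcongr
        exact (card_edgesInColumns_le A _ fun c _ => (hAreg.2 c).le).trans
          (Nat.mul_le_mul_right d (card_filter_pos_or_pos_le (fun a => (hAreg.1 a).le) i i'))
    _ = Zae (switchM A i i' j j') + 2 * d ^ 2 := by ring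

/-- If `G` and `G'` are adjacent simple `d`-regular bipartite graphs then
`Z(G) ≤ Z(G') + 2d²`. -/
theorem stmt3 (n d : ℕ) (A B : Fin n → Fin n → ℕ)
    (hAreg : IsReg n d A) (hAs : IsSimpleG A)
    (hBreg : IsReg n d B) (hBs : IsSimpleG B)
    (hadj : AdjacentM A B) :
    Zae A ≤ Zae B + 2 * d ^ 2 :=
  stmt3_general n d A B hAreg hadj
end

section
/- For every simple d-regular bipartite graph G on [n]⊔[n], the number of adjacent simple graphs G' with Z(G') < Z(G) is at least (1/2)·Z(G)·(nd − 2d⁴). -/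
open Finset

set_option linter.unusedSectionVars false

namespace Stmt4Aux

variable {n : ℕ}

/-- Two rows share at least two columns. -/
def Wit (A : Fin n → Fin n → ℕ) (a k : Fin n) : Prop :=
  ∃ c₁ c₂, c₁ ≠ c₂ ∧ 0 < A a c₁ ∧ 0 < A k c₁ ∧ 0 < A a c₂ ∧ 0 < A k c₂

lemma wit_symm {A : Fin n → Fin n → ℕ} {a k : Fin n} (h : Wit A a k) : Wit A k a := by
  obtain ⟨c₁, c₂, h1, h2, h3, h4, h5⟩ := h
  exact ⟨c₁, c₂, h1, h3, h2, h5, h4⟩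

lemma two_le_iff_wit (A : Fin n → Fin n → ℕ) (a k : Fin n) :
    2 ≤ (Finset.univ.filter fun j => 0 < A a j ∧ 0 < A k j).card ↔ Wit A a k := by
  rw [show (2 : ℕ) ≤ _ ↔ 1 < (Finset.univ.filter fun j => 0 < A a j ∧ 0 < A k j).card from Iff.rfl,
    Finset.one_lt_card]
  constructor
  · rintro ⟨c₁, hc₁, c₂, hc₂, hne⟩
    simp only [mem_filter] at hc₁ hc₂
    exact ⟨c₁, c₂, hne, hc₁.2.1, hc₁.2.2, hc₂.2.1, hc₂.2.2⟩
  · rintro ⟨c₁, c₂, hne, h1, h2, h3, h4⟩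
    exact ⟨c₁, by simp [h1, h2], c₂, by simp [h3, h4], hne⟩

def Bad (A : Fin n → Fin n → ℕ) : Finset (Fin n × Fin n) :=
  Finset.univ.filter fun p : Fin n × Fin n =>
    0 < A p.1 p.2 ∧ ∃ k, k ≠ p.1 ∧ 0 < A k p.2 ∧
      2 ≤ (Finset.univ.filter fun j => 0 < A p.1 j ∧ 0 < A k j).card

lemma Zae_eq (A : Fin n → Fin n → ℕ) : Zae A = (Bad A).card := rfl

lemma mem_Bad {A : Fin n → Fin n → ℕ} {p : Fin n × Fin n} :
    p ∈ Bad A ↔ 0 < A p.1 p.2 ∧ ∃ k, k ≠ p.1 ∧ 0 < A k p.2 ∧ Wit A p.1 k := by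
  simp only [Bad, mem_filter, mem_univ, true_and, two_le_iff_wit]

/-- The conditions on the switching configuration `(i,j),(i',j')`. -/
def GoodCfg (A : Fin n → Fin n → ℕ) (i i' : Fin n) (j j' : Fin n) : Prop :=
  0 < A i j ∧ 0 < A i' j' ∧
  (∀ a, 0 < A a j' → ∀ c, 0 < A a c → 0 < A i c → False) ∧
  (∀ k, 0 < A k j → ∀ c, 0 < A k c → 0 < A i' c → False)

variable {A : Fin n → Fin n → ℕ} {i i' j j' : Fin n}

lemma GoodCfg.disj (hg : GoodCfg A i i' j j') : ∀ c, 0 < A i c → 0 < A i' c → False :=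
  fun c h1 h2 => hg.2.2.1 i' hg.2.1 c h2 h1

lemma GoodCfg.ij' (hg : GoodCfg A i i' j j') : A i j' = 0 := by
  by_contra h
  exact hg.2.2.1 i (Nat.pos_of_ne_zero h) j hg.1 hg.1

lemma GoodCfg.i'j (hg : GoodCfg A i i' j j') : A i' j = 0 := by
  by_contra h
  exact hg.2.2.2 i' (Nat.pos_of_ne_zero h) j' hg.2.1 hg.2.1

lemma GoodCfg.ne_i (hg : GoodCfg A i i' j j') : i ≠ i' := by
  intro h; subst h; have h1 := hg.i'j; have h2 := hg.1; omega
lemma GoodCfg.ne_j (hg : GoodCfg A i i' j j') : j ≠ j' := by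
  intro h; subst h; have h1 := hg.ij'; have h2 := hg.1; omega

section Entries
variable (hs : IsSimpleG A) (hg : GoodCfg A i i' j j')
include hs hg

lemma val_ij : A i j = 1 := le_antisymm (hs i j) hg.1
lemma val_i'j' : A i' j' = 1 := le_antisymm (hs i' j') hg.2.1

lemma switch_ij : switchM A i i' j j' i j = 0 := by
  simp [switchM, val_ij hs hg]
lemma switch_i'j' : switchM A i i' j j' i' j' = 0 := by
  simp [switchM, hg.ne_i.symm, hg.ne_j.symm, val_i'j' hs hg]
lemma switch_ij' : switchM A i i' j j' i j' = 1 := by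
  simp [switchM, hg.ne_j, hg.ne_j.symm, hg.ne_i, hg.ne_i.symm, hg.ij']
lemma switch_i'j : switchM A i i' j j' i' j = 1 := by
  simp [switchM, hg.ne_i, hg.ne_i.symm, hg.ne_j, hg.ne_j.symm, hg.i'j]

lemma switch_apply_of {x : Fin n} (hx : x ≠ i) (hx' : x ≠ i') (y : Fin n) :
    switchM A i i' j j' x y = A x y := by
  simp [switchM, hx, hx']

lemma switch_row_i (y : Fin n) :
    (0 < switchM A i i' j j' i y) ↔ (0 < A i y ∧ y ≠ j) ∨ y = j' := by
  by_cases h1 : y = j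
  · subst h1; simp [switch_ij hs hg, hg.ne_j]
  by_cases h2 : y = j'
  · subst h2; simp [switch_ij' hs hg, h1]
  · have : switchM A i i' j j' i y = A i y := by simp [switchM, h1, h2]
    simp [this, h1, h2]

lemma switch_row_i' (y : Fin n) :
    (0 < switchM A i i' j j' i' y) ↔ (0 < A i' y ∧ y ≠ j') ∨ y = j := by
  by_cases h2 : y = j'
  · subst h2; simp [switch_i'j' hs hg, hg.ne_j.symm]
  by_cases h1 : y = j
  · subst h1; simp [switch_i'j hs hg, h2]
  · have : switchM A i i' j j' i' y = A i' y := by simp [switchM, hg.ne_i.symm, h1, h2]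
    simp [this, h1, h2]

end Entries

end Stmt4Aux
open Finset
namespace Stmt4Aux
section
variable {n : ℕ} {A : Fin n → Fin n → ℕ} {i i' j j' : Fin n}
variable (hs : IsSimpleG A) (hg : GoodCfg A i i' j j')
include hs hg

lemma wit_trans_i {y : Fin n} (hy : y ≠ i) (hy' : y ≠ i')
    (hw : Wit (switchM A i i' j j') i y) :
    (∀ c, 0 < A y c → c ≠ j') ∧ Wit A i y := by
  obtain ⟨c₁, c₂, hne, hb1, hb1y, hb2, hb2y⟩ := hw
  rw [switch_apply_of hs hg hy hy'] at hb1y hb2y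
  rw [switch_row_i hs hg] at hb1 hb2
  have hyj' : ¬ 0 < A y j' := by
    intro hyy
    have hF := hg.2.2.1 y hyy
    rcases hb1 with ⟨h1, -⟩ | rfl
    · exact hF c₁ hb1y h1
    · rcases hb2 with ⟨h2, -⟩ | rfl
      · exact hF c₂ hb2y h2
      · exact hne rfl
  refine ⟨fun c hc hcj => hyj' (hcj ▸ hc), ?_⟩
  rcases hb1 with ⟨h1, -⟩ | rfl
  · rcases hb2 with ⟨h2, -⟩ | rfl
    · exact ⟨c₁, c₂, hne, h1, hb1y, h2, hb2y⟩
    · exact absurd hb2y hyj'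
  · exact absurd hb1y hyj'

lemma wit_trans_i' {y : Fin n} (hy : y ≠ i) (hy' : y ≠ i')
    (hw : Wit (switchM A i i' j j') i' y) :
    (∀ c, 0 < A y c → c ≠ j) ∧ Wit A i' y := by
  obtain ⟨c₁, c₂, hne, hb1, hb1y, hb2, hb2y⟩ := hw
  rw [switch_apply_of hs hg hy hy'] at hb1y hb2y
  rw [switch_row_i' hs hg] at hb1 hb2
  have hyj : ¬ 0 < A y j := by
    intro hyy
    have hF := hg.2.2.2 y hyy
    rcases hb1 with ⟨h1, -⟩ | rfl
    · exact hF c₁ hb1y h1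
    · rcases hb2 with ⟨h2, -⟩ | rfl
      · exact hF c₂ hb2y h2
      · exact hne rfl
  refine ⟨fun c hc hcj => hyj (hcj ▸ hc), ?_⟩
  rcases hb1 with ⟨h1, -⟩ | rfl
  · rcases hb2 with ⟨h2, -⟩ | rfl
    · exact ⟨c₁, c₂, hne, h1, hb1y, h2, hb2y⟩
    · exact absurd hb2y hyj
  · exact absurd hb1y hyj

lemma wit_trans_ii' (hw : Wit (switchM A i i' j j') i i') : False := by
  obtain ⟨c₁, c₂, hne, hb1, hb1', hb2, hb2'⟩ := hw
  rw [switch_row_i hs hg] at hb1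
  rw [switch_row_i' hs hg] at hb1'
  rcases hb1 with ⟨h1, h1j⟩ | rfl
  · rcases hb1' with ⟨h1', h1j'⟩ | rfl
    · exact hg.disj c₁ h1 h1'
    · exact h1j rfl
  · rcases hb1' with ⟨h1', h1j'⟩ | h
    · exact h1j' rfl
    · exact hg.ne_j h.symm

lemma wit_trans_out {a k : Fin n} (ha : a ≠ i) (ha' : a ≠ i') (hk : k ≠ i) (hk' : k ≠ i')
    (hw : Wit (switchM A i i' j j') a k) : Wit A a k := by
  obtain ⟨c₁, c₂, hne, h1, h2, h3, h4⟩ := hw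
  rw [switch_apply_of hs hg ha ha'] at h1 h3
  rw [switch_apply_of hs hg hk hk'] at h2 h4
  exact ⟨c₁, c₂, hne, h1, h2, h3, h4⟩

lemma bad_subset : Bad (switchM A i i' j j') ⊆ (Bad A).erase (i, j) := by
  intro p hp
  rw [mem_Bad] at hp
  obtain ⟨hab, k, hk, hkb, hw⟩ := hp
  obtain ⟨a, b⟩ := p
  simp only at hab hkb hw hk ⊢
  rw [Finset.mem_erase, mem_Bad]
  by_cases ha : a = i
  · subst ha
    by_cases hki' : k = i'
    · subst hki'; exact absurd hw (fun h => wit_trans_ii' hs hg h)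
    · have hAkb : 0 < A k b := by rwa [switch_apply_of hs hg hk hki'] at hkb
      obtain ⟨hj', hwA⟩ := wit_trans_i hs hg hk hki' hw
      have hbj' : b ≠ j' := hj' b hAkb
      rw [switch_row_i hs hg] at hab
      rcases hab with ⟨hib, hbj⟩ | h
      · exact ⟨fun h => hbj (congrArg Prod.snd h), hib, k, hk, hAkb, hwA⟩
      · exact absurd h hbj'
  · by_cases ha' : a = i'
    · subst ha'
      by_cases hki : k = i
      · subst hki; exact absurd (wit_symm hw) (fun h => wit_trans_ii' hs hg h)
      · have hki' : k ≠ a := hk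
        have hAkb : 0 < A k b := by rwa [switch_apply_of hs hg hki hk] at hkb
        obtain ⟨hj, hwA⟩ := wit_trans_i' hs hg hki hk hw
        have hbj : b ≠ j := hj b hAkb
        rw [switch_row_i' hs hg] at hab
        rcases hab with ⟨hi'b, hbj'⟩ | h
        · exact ⟨fun h => hg.ne_i (congrArg Prod.fst h).symm, hi'b, k, hk, hAkb, hwA⟩
        · exact absurd h hbj
    · have hAab : 0 < A a b := by rwa [switch_apply_of hs hg ha ha'] at hab
      refine ⟨fun h => ha (congrArg Prod.fst h), hAab, ?_⟩
      by_cases hki : k = i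
      · subst hki
        obtain ⟨hj', hwA⟩ := wit_trans_i hs hg ha ha' (wit_symm hw)
        rw [switch_row_i hs hg] at hkb
        rcases hkb with ⟨hib, -⟩ | rfl
        · exact ⟨k, hk, hib, wit_symm hwA⟩
        · exact absurd hAab (fun h => hj' _ h rfl)
      · by_cases hki' : k = i'
        · subst hki'
          obtain ⟨hj, hwA⟩ := wit_trans_i' hs hg ha ha' (wit_symm hw)
          rw [switch_row_i' hs hg] at hkb
          rcases hkb with ⟨hi'b, -⟩ | rfl
          · exact ⟨k, hk, hi'b, wit_symm hwA⟩
          · exact absurd hAab (fun h => hj _ h rfl)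
        · have hAkb : 0 < A k b := by rwa [switch_apply_of hs hg hki hki'] at hkb
          exact ⟨k, hk, hAkb, wit_trans_out hs hg ha ha' hki hki' hw⟩

end
section
variable {n : ℕ} {A : Fin n → Fin n → ℕ} {i i' j j' : Fin n}

instance (A : Fin n → Fin n → ℕ) (i i' j j' : Fin n) : Decidable (GoodCfg A i i' j j') := by
  unfold GoodCfg; infer_instance

section Part3
variable (hs : IsSimpleG A) (hg : GoodCfg A i i' j j')
include hs hg

lemma switch_simple : IsSimpleG (switchM A i i' j j') := by
  intro x y
  by_cases hx : x = i
  · subst x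
    by_cases h1 : y = j
    · subst y; simp [switch_ij hs hg]
    · by_cases h2 : y = j'
      · subst y; simp [switch_ij' hs hg]
      · rw [show switchM A i i' j j' i y = A i y from by simp [switchM, h1, h2]]
        exact hs i y
  · by_cases hx' : x = i'
    · subst x
      by_cases h2 : y = j'
      · subst y; simp [switch_i'j' hs hg]
      · by_cases h1 : y = j
        · subst y; simp [switch_i'j hs hg]
        · rw [show switchM A i i' j j' i' y = A i' y from by
            simp [switchM, hg.ne_i.symm, h1, h2]]
          exact hs i' y
    · rw [switch_apply_of hs hg hx hx']; exact hs x y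

lemma switch_reg {d : ℕ} (hreg : IsReg n d A) : IsReg n d (switchM A i i' j j') := by
  constructor
  · intro x
    by_cases hx : x = i
    · subst x
      have key : ∀ y ∈ Finset.univ, switchM A i i' j j' i y + (if y = j then 1 else 0)
          = A i y + (if y = j' then 1 else 0) := by
        intro y _
        by_cases h1 : y = j
        · subst y; simp [switch_ij hs hg, val_ij hs hg, hg.ne_j]
        · by_cases h2 : y = j'
          · subst y; simp [switch_ij' hs hg, hg.ij', h1]
          · simp [switchM, h1, h2]
      have e1 := Finset.sum_congr rfl key
      rw [Finset.sum_add_distrib, Finset.sum_add_distrib,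
        Finset.sum_ite_eq' Finset.univ j (fun _ => (1:ℕ)),
        Finset.sum_ite_eq' Finset.univ j' (fun _ => (1:ℕ))] at e1
      simp only [Finset.mem_univ, if_true] at e1
      have := hreg.1 i
      omega
    · by_cases hx' : x = i'
      · subst x
        have key : ∀ y ∈ Finset.univ, switchM A i i' j j' i' y + (if y = j' then 1 else 0)
            = A i' y + (if y = j then 1 else 0) := by
          intro y _
          by_cases h2 : y = j'
          · subst y; simp [switch_i'j' hs hg, val_i'j' hs hg, hg.ne_j.symm]
          · by_cases h1 : y = j
            · subst y; simp [switch_i'j hs hg, hg.i'j, h2]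
            · simp [switchM, hg.ne_i.symm, h1, h2]
        have e1 := Finset.sum_congr rfl key
        rw [Finset.sum_add_distrib, Finset.sum_add_distrib,
          Finset.sum_ite_eq' Finset.univ j' (fun _ => (1:ℕ)),
          Finset.sum_ite_eq' Finset.univ j (fun _ => (1:ℕ))] at e1
        simp only [Finset.mem_univ, if_true] at e1
        have := hreg.1 i'
        omega
      · rw [Finset.sum_congr rfl (fun y _ => switch_apply_of hs hg hx hx' y)]
        exact hreg.1 x
  · intro y
    by_cases hy : y = j
    · subst y
      have key : ∀ x ∈ Finset.univ, switchM A i i' j j' x j + (if x = i then 1 else 0)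
          = A x j + (if x = i' then 1 else 0) := by
        intro x _
        by_cases h1 : x = i
        · subst x; simp [switch_ij hs hg, val_ij hs hg, hg.ne_i]
        · by_cases h2 : x = i'
          · subst x; simp [switch_i'j hs hg, hg.i'j, h1]
          · simp [switchM, h1, h2]
      have e1 := Finset.sum_congr rfl key
      rw [Finset.sum_add_distrib, Finset.sum_add_distrib,
        Finset.sum_ite_eq' Finset.univ i (fun _ => (1:ℕ)),
        Finset.sum_ite_eq' Finset.univ i' (fun _ => (1:ℕ))] at e1
      simp only [Finset.mem_univ, if_true] at e1
      have := hreg.2 j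
      omega
    · by_cases hy' : y = j'
      · subst y
        have key : ∀ x ∈ Finset.univ, switchM A i i' j j' x j' + (if x = i' then 1 else 0)
            = A x j' + (if x = i then 1 else 0) := by
          intro x _
          by_cases h2 : x = i'
          · subst x; simp [switch_i'j' hs hg, val_i'j' hs hg, hg.ne_i.symm]
          · by_cases h1 : x = i
            · subst x; simp [switch_ij' hs hg, hg.ij', h2]
            · simp [switchM, h1, h2]
        have e1 := Finset.sum_congr rfl key
        rw [Finset.sum_add_distrib, Finset.sum_add_distrib,
          Finset.sum_ite_eq' Finset.univ i' (fun _ => (1:ℕ)),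
          Finset.sum_ite_eq' Finset.univ i (fun _ => (1:ℕ))] at e1
        simp only [Finset.mem_univ, if_true] at e1
        have := hreg.2 j'
        omega
      · have key : ∀ x ∈ Finset.univ, switchM A i i' j j' x y = A x y := by
          intro x _; simp [switchM, hy, hy']
        rw [Finset.sum_congr rfl key]
        exact hreg.2 y

lemma switch_adj : AdjacentM A (switchM A i i' j j') :=
  ⟨i, i', j, j', hg.ne_i, hg.ne_j, hg.1, hg.2.1, rfl⟩

lemma zae_lt (hbad : (i, j) ∈ Bad A) : Zae (switchM A i i' j j') < Zae A := by
  rw [Zae_eq, Zae_eq]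
  exact lt_of_le_of_lt (Finset.card_le_card (bad_subset hs hg))
    (Finset.card_erase_lt_of_mem hbad)

lemma switch_lt_iff (x y : Fin n) :
    switchM A i i' j j' x y < A x y ↔ (x = i ∧ y = j) ∨ (x = i' ∧ y = j') := by
  by_cases hx : x = i
  · subst x
    by_cases h1 : y = j
    · subst y; simp [switch_ij hs hg, val_ij hs hg, hg.ne_i]
    · by_cases h2 : y = j'
      · subst y; simp [switch_ij' hs hg, hg.ij', hg.ne_i, hg.ne_j.symm]
      · rw [show switchM A i i' j j' i y = A i y from by simp [switchM, h1, h2]]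
        simp [h1, h2, hg.ne_i]
  · by_cases hx' : x = i'
    · subst x
      by_cases h2 : y = j'
      · subst y; simp [switch_i'j' hs hg, val_i'j' hs hg, hg.ne_i.symm]
      · by_cases h1 : y = j
        · subst y; simp [switch_i'j hs hg, hg.i'j, h2, hg.ne_i.symm]
        · rw [show switchM A i i' j j' i' y = A i' y from by
            simp [switchM, hg.ne_i.symm, h1, h2]]
          simp [h1, h2, hg.ne_i.symm]
    · rw [switch_apply_of hs hg hx hx']
      simp [hx, hx']

end Part3

lemma config_unique (hs : IsSimpleG A) {i₂ i₂' j₂ j₂' : Fin n}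
    (hg : GoodCfg A i i' j j') (hg2 : GoodCfg A i₂ i₂' j₂ j₂')
    (heq : switchM A i i' j j' = switchM A i₂ i₂' j₂ j₂') :
    (i = i₂ ∧ j = j₂ ∧ i' = i₂' ∧ j' = j₂') ∨ (i = i₂' ∧ j = j₂' ∧ i' = i₂ ∧ j' = j₂) := by
  have h1 : switchM A i i' j j' i₂ j₂ < A i₂ j₂ := by
    rw [heq, switch_ij hs hg2, val_ij hs hg2]; norm_num
  have h2 : switchM A i i' j j' i₂' j₂' < A i₂' j₂' := by
    rw [heq, switch_i'j' hs hg2, val_i'j' hs hg2]; norm_num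
  rw [switch_lt_iff hs hg] at h1 h2
  rcases h1 with ⟨e1, e2⟩ | ⟨e1, e2⟩
  · rcases h2 with ⟨e3, e4⟩ | ⟨e3, e4⟩
    · exact absurd (e1.trans e3.symm) hg2.ne_i
    · exact Or.inl ⟨e1.symm, e2.symm, e3.symm, e4.symm⟩
  · rcases h2 with ⟨e3, e4⟩ | ⟨e3, e4⟩
    · exact Or.inr ⟨e3.symm, e4.symm, e1.symm, e2.symm⟩
    · exact absurd (e1.trans e3.symm) hg2.ne_i
end
section
variable {n d : ℕ} {A : Fin n → Fin n → ℕ}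
variable (hs : IsSimpleG A) (hreg : IsReg n d A)
include hs hreg

lemma card_row (x : Fin n) : (Finset.univ.filter fun y => 0 < A x y).card = d := by
  rw [Finset.card_filter]
  rw [Finset.sum_congr rfl (fun y _ => show (if 0 < A x y then 1 else 0) = A x y by
    have := hs x y; split_ifs <;> omega)]
  exact hreg.1 x

lemma card_col (y : Fin n) : (Finset.univ.filter fun x => 0 < A x y).card = d := by
  rw [Finset.card_filter]
  rw [Finset.sum_congr rfl (fun x _ => show (if 0 < A x y then 1 else 0) = A x y by
    have := hs x y; split_ifs <;> omega)]
  exact hreg.2 y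

lemma card_E : (Finset.univ.filter fun q : Fin n × Fin n => 0 < A q.1 q.2).card = n * d := by
  rw [Finset.card_filter, Fintype.sum_prod_type]
  rw [Finset.sum_congr rfl (fun x _ => show (∑ y, if 0 < A x y then 1 else 0) = d by
    rw [← Finset.card_filter]; exact card_row hs hreg x)]
  simp [mul_comm]

lemma card_V1 (i : Fin n) :
    ((Finset.univ.filter fun q : Fin n × Fin n => 0 < A q.1 q.2).filter
      (fun q => ∃ a c, 0 < A a q.2 ∧ 0 < A a c ∧ 0 < A i c)).card ≤ d ^ 4 := by
  classical
  set J1 := Finset.univ.filter (fun y : Fin n => ∃ a c, 0 < A a y ∧ 0 < A a c ∧ 0 < A i c)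
    with hJ1def
  have hJ1 : J1.card ≤ d ^ 3 := by
    have hsub : J1 ⊆ (Finset.univ.filter fun c => 0 < A i c).biUnion fun c =>
        (Finset.univ.filter fun a => 0 < A a c).biUnion fun a =>
          Finset.univ.filter fun y => 0 < A a y := by
      intro y hy
      simp only [hJ1def, Finset.mem_filter, Finset.mem_univ, true_and] at hy
      obtain ⟨a, c, h1, h2, h3⟩ := hy
      simp only [Finset.mem_biUnion, Finset.mem_filter, Finset.mem_univ, true_and]
      exact ⟨c, h3, a, h2, h1⟩
    refine (Finset.card_le_card hsub).trans (Finset.card_biUnion_le.trans ?_)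
    have step : ∀ c ∈ Finset.univ.filter fun c => 0 < A i c,
        ((Finset.univ.filter fun a => 0 < A a c).biUnion fun a =>
          Finset.univ.filter fun y => 0 < A a y).card ≤ d * d := by
      intro c _
      refine Finset.card_biUnion_le.trans ?_
      refine (Finset.sum_le_sum fun a _ => le_of_eq (card_row hs hreg a)).trans ?_
      rw [Finset.sum_const, smul_eq_mul, card_col hs hreg]
    refine (Finset.sum_le_sum step).trans ?_
    rw [Finset.sum_const, smul_eq_mul, card_row hs hreg]
    ring_nf
    omega
  have hsub2 : (Finset.univ.filter fun q : Fin n × Fin n => 0 < A q.1 q.2).filter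
      (fun q => ∃ a c, 0 < A a q.2 ∧ 0 < A a c ∧ 0 < A i c) ⊆
      J1.biUnion fun y => (Finset.univ.filter fun x => 0 < A x y).image fun x => (x, y) := by
    intro q hq
    simp only [Finset.mem_filter, Finset.mem_univ, true_and] at hq
    obtain ⟨hq1, a, c, h1, h2, h3⟩ := hq
    simp only [Finset.mem_biUnion, Finset.mem_image, Finset.mem_filter, Finset.mem_univ,
      true_and, hJ1def]
    exact ⟨q.2, ⟨a, c, h1, h2, h3⟩, q.1, hq1, rfl⟩
  refine (Finset.card_le_card hsub2).trans (Finset.card_biUnion_le.trans ?_)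
  refine (Finset.sum_le_sum fun y _ =>
    (Finset.card_image_le).trans (le_of_eq (card_col hs hreg y))).trans ?_
  rw [Finset.sum_const, smul_eq_mul]
  calc J1.card * d ≤ d ^ 3 * d := Nat.mul_le_mul_right d hJ1
    _ = d ^ 4 := by ring

lemma card_V2 (j : Fin n) :
    ((Finset.univ.filter fun q : Fin n × Fin n => 0 < A q.1 q.2).filter
      (fun q => ∃ k c, 0 < A q.1 c ∧ 0 < A k c ∧ 0 < A k j)).card ≤ d ^ 4 := by
  classical
  set I1 := Finset.univ.filter (fun x : Fin n => ∃ k c, 0 < A x c ∧ 0 < A k c ∧ 0 < A k j)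
    with hI1def
  have hI1 : I1.card ≤ d ^ 3 := by
    have hsub : I1 ⊆ (Finset.univ.filter fun k => 0 < A k j).biUnion fun k =>
        (Finset.univ.filter fun c => 0 < A k c).biUnion fun c =>
          Finset.univ.filter fun x => 0 < A x c := by
      intro x hx
      simp only [hI1def, Finset.mem_filter, Finset.mem_univ, true_and] at hx
      obtain ⟨k, c, h1, h2, h3⟩ := hx
      simp only [Finset.mem_biUnion, Finset.mem_filter, Finset.mem_univ, true_and]
      exact ⟨k, h3, c, h2, h1⟩
    refine (Finset.card_le_card hsub).trans (Finset.card_biUnion_le.trans ?_)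
    have step : ∀ k ∈ Finset.univ.filter fun k => 0 < A k j,
        ((Finset.univ.filter fun c => 0 < A k c).biUnion fun c =>
          Finset.univ.filter fun x => 0 < A x c).card ≤ d * d := by
      intro k _
      refine Finset.card_biUnion_le.trans ?_
      refine (Finset.sum_le_sum fun c _ => le_of_eq (card_col hs hreg c)).trans ?_
      rw [Finset.sum_const, smul_eq_mul, card_row hs hreg]
    refine (Finset.sum_le_sum step).trans ?_
    rw [Finset.sum_const, smul_eq_mul, card_col hs hreg]
    ring_nf
    omega
  have hsub2 : (Finset.univ.filter fun q : Fin n × Fin n => 0 < A q.1 q.2).filter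
      (fun q => ∃ k c, 0 < A q.1 c ∧ 0 < A k c ∧ 0 < A k j) ⊆
      I1.biUnion fun x => (Finset.univ.filter fun y => 0 < A x y).image fun y => (x, y) := by
    intro q hq
    simp only [Finset.mem_filter, Finset.mem_univ, true_and] at hq
    obtain ⟨hq1, k, c, h1, h2, h3⟩ := hq
    simp only [Finset.mem_biUnion, Finset.mem_image, Finset.mem_filter, Finset.mem_univ,
      true_and, hI1def]
    exact ⟨q.1, ⟨k, c, h1, h2, h3⟩, q.2, hq1, rfl⟩
  refine (Finset.card_le_card hsub2).trans (Finset.card_biUnion_le.trans ?_)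
  refine (Finset.sum_le_sum fun x _ =>
    (Finset.card_image_le).trans (le_of_eq (card_row hs hreg x))).trans ?_
  rw [Finset.sum_const, smul_eq_mul]
  calc I1.card * d ≤ d ^ 3 * d := Nat.mul_le_mul_right d hI1
    _ = d ^ 4 := by ring

lemma good_count (p : Fin n × Fin n) (hp : 0 < A p.1 p.2) :
    n * d - 2 * d ^ 4 ≤ ((Finset.univ.filter fun q : Fin n × Fin n => 0 < A q.1 q.2).filter
      fun q => GoodCfg A p.1 q.1 p.2 q.2).card := by
  classical
  set E := Finset.univ.filter fun q : Fin n × Fin n => 0 < A q.1 q.2 with hEdef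
  set G := E.filter (fun q => GoodCfg A p.1 q.1 p.2 q.2) with hGdef
  set V1 := E.filter (fun q => ∃ a c, 0 < A a q.2 ∧ 0 < A a c ∧ 0 < A p.1 c) with hV1def
  set V2 := E.filter (fun q => ∃ k c, 0 < A q.1 c ∧ 0 < A k c ∧ 0 < A k p.2) with hV2def
  have hsub : E ⊆ G ∪ V1 ∪ V2 := by
    intro q hq
    by_cases h1 : ∃ a c, 0 < A a q.2 ∧ 0 < A a c ∧ 0 < A p.1 c
    · exact Finset.mem_union_left _ (Finset.mem_union_right _ (Finset.mem_filter.mpr ⟨hq, h1⟩))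
    · by_cases h2 : ∃ k c, 0 < A q.1 c ∧ 0 < A k c ∧ 0 < A k p.2
      · exact Finset.mem_union_right _ (Finset.mem_filter.mpr ⟨hq, h2⟩)
      · refine Finset.mem_union_left _ (Finset.mem_union_left _ (Finset.mem_filter.mpr
          ⟨hq, hp, (Finset.mem_filter.mp hq).2, ?_, ?_⟩))
        · intro a ha c hc hic
          exact h1 ⟨a, c, ha, hc, hic⟩
        · intro k hk c hkc hi'c
          exact h2 ⟨k, c, hi'c, hkc, hk⟩
  have hcard : E.card ≤ G.card + d ^ 4 + d ^ 4 := by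
    refine (Finset.card_le_card hsub).trans ?_
    refine (Finset.card_union_le _ _).trans ?_
    have := (Finset.card_union_le G V1)
    have hv1 := card_V1 hs hreg p.1
    have hv2 := card_V2 hs hreg p.2
    rw [← hEdef] at hv1 hv2
    rw [← hV1def] at hv1
    rw [← hV2def] at hv2
    omega
  rw [card_E hs hreg] at hcard
  omega

end
end Stmt4Aux

open Stmt4Aux

/-- For every simple `d`-regular bipartite graph `G`, the number of adjacent
simple graphs `G'` with `Z(G') < Z(G)` is at least `(1/2)·Z(G)·(nd − 2d⁴)`. -/
theorem stmt4 (n d : ℕ) (A : Fin n → Fin n → ℕ)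
    (hAreg : IsReg n d A) (hAs : IsSimpleG A) :
    Zae A * (n * d - 2 * d ^ 4) ≤
      2 * ({B | IsReg n d B ∧ IsSimpleG B ∧ AdjacentM A B ∧ Zae B < Zae A} :
        Set (Fin n → Fin n → ℕ)).ncard := by
  classical
  set T : Set (Fin n → Fin n → ℕ) :=
    {B | IsReg n d B ∧ IsSimpleG B ∧ AdjacentM A B ∧ Zae B < Zae A} with hTdef
  set E := Finset.univ.filter fun q : Fin n × Fin n => 0 < A q.1 q.2 with hEdef
  set S : Finset ((Fin n × Fin n) × (Fin n × Fin n)) :=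
    (Bad A).biUnion (fun p => (E.filter fun q => GoodCfg A p.1 q.1 p.2 q.2).image
      fun q => (p, q)) with hSdef
  set Φ : (Fin n × Fin n) × (Fin n × Fin n) → (Fin n → Fin n → ℕ) :=
    fun r => switchM A r.1.1 r.2.1 r.1.2 r.2.2 with hΦdef
  have hSmem : ∀ r ∈ S, r.1 ∈ Bad A ∧ GoodCfg A r.1.1 r.2.1 r.1.2 r.2.2 := by
    intro r hr
    simp only [hSdef, Finset.mem_biUnion, Finset.mem_image, Finset.mem_filter] at hr
    obtain ⟨p, hp, q, ⟨-, hgood⟩, rfl⟩ := hr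
    exact ⟨hp, hgood⟩
  -- lower bound on S
  have hScard_ge : Zae A * (n * d - 2 * d ^ 4) ≤ S.card := by
    rw [hSdef, Finset.card_biUnion]
    · rw [Zae_eq]
      calc (Bad A).card * (n * d - 2 * d ^ 4)
          = ∑ _p ∈ Bad A, (n * d - 2 * d ^ 4) := by
            rw [Finset.sum_const, smul_eq_mul]
        _ ≤ ∑ p ∈ Bad A, ((E.filter fun q => GoodCfg A p.1 q.1 p.2 q.2).image
              fun q => (p, q)).card := by
            refine Finset.sum_le_sum fun p hp => ?_
            rw [Finset.card_image_of_injective _ (fun q q' h => (Prod.ext_iff.mp h).2)]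
            exact good_count hAs hAreg p (mem_Bad.mp hp).1
    · intro p hp p' hp' hne
      simp only [Finset.disjoint_left]
      intro r hr hr'
      simp only [Finset.mem_image, Finset.mem_filter] at hr hr'
      obtain ⟨q, -, rfl⟩ := hr
      obtain ⟨q', -, h⟩ := hr'
      exact hne (Prod.ext_iff.mp h).1.symm
  -- fibers of Φ have size ≤ 2
  have hfiber : ∀ B ∈ S.image Φ, (S.filter fun r => Φ r = B).card ≤ 2 := by
    intro B hB
    obtain ⟨r₀, hr₀S, hr₀⟩ := Finset.mem_image.mp hB
    have hsub : S.filter (fun r => Φ r = B) ⊆ {r₀, (r₀.2, r₀.1)} := by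
      intro r hr
      rw [Finset.mem_filter] at hr
      obtain ⟨hrS, hrB⟩ := hr
      obtain ⟨-, hrg⟩ := hSmem r hrS
      obtain ⟨-, hr0g⟩ := hSmem r₀ hr₀S
      have heq : switchM A r.1.1 r.2.1 r.1.2 r.2.2
          = switchM A r₀.1.1 r₀.2.1 r₀.1.2 r₀.2.2 := hrB.trans hr₀.symm
      rcases config_unique hAs hrg hr0g heq with ⟨e1, e2, e3, e4⟩ | ⟨e1, e2, e3, e4⟩
      · simp only [Finset.mem_insert, Finset.mem_singleton]
        left
        exact Prod.ext (Prod.ext e1 e2) (Prod.ext e3 e4)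
      · simp only [Finset.mem_insert, Finset.mem_singleton]
        right
        exact Prod.ext (Prod.ext e1 e2) (Prod.ext e3 e4)
    refine (Finset.card_le_card hsub).trans ?_
    refine (Finset.card_insert_le _ _).trans ?_
    simp
  have hScard_le : S.card ≤ 2 * (S.image Φ).card :=
    Finset.card_le_mul_card_image S 2 hfiber
  -- the image lands in T
  have hsubT : ↑(S.image Φ) ⊆ T := by
    intro B hB
    simp only [Finset.coe_image, Set.mem_image, Finset.mem_coe] at hB
    obtain ⟨r, hrS, rfl⟩ := hB
    obtain ⟨hr1, hrg⟩ := hSmem r hrS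
    refine ⟨switch_reg hAs hrg hAreg, switch_simple hAs hrg, switch_adj hAs hrg, ?_⟩
    exact zae_lt hAs hrg (by simpa using hr1)
  have hTfin : T.Finite := by
    refine Set.Finite.subset (Set.finite_range Φ) ?_
    rintro B ⟨-, -, ⟨i, i', j, j', -, -, -, -, rfl⟩, -⟩
    exact ⟨((i, j), (i', j')), rfl⟩
  have himg : (S.image Φ).card ≤ T.ncard := by
    rw [← Set.ncard_coe_finset]
    exact Set.ncard_le_ncard hsubT hTfin
  calc Zae A * (n * d - 2 * d ^ 4) ≤ S.card := hScard_ge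
    _ ≤ 2 * (S.image Φ).card := hScard_le
    _ ≤ 2 * T.ncard := by omega
end

section
/- For every simple d-regular bipartite graph G on [n]⊔[n], the number of adjacent simple graphs G' with Z(G') > Z(G) is at most n·d⁵. -/
open Finset

lemma switch_comm {n m : ℕ} (A : Fin n → Fin m → ℕ) (i i' : Fin n) (j j' : Fin m)
    (hii : i ≠ i') (hjj : j ≠ j') : switchM A i i' j j' = switchM A i' i j' j := by
  funext a b
  unfold switchM
  by_cases h1 : a = i <;> by_cases h2 : a = i' <;> by_cases h3 : b = j <;> by_cases h4 : b = j' <;>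
    simp_all

lemma hrowo {n : ℕ} (A : Fin n → Fin n → ℕ) (i₀ i₁ j₀ j₁ : Fin n) (a b : Fin n)
    (h0 : a ≠ i₀) (h1 : a ≠ i₁) :
    switchM A i₀ i₁ j₀ j₁ a b = A a b := by
  simp [switchM, h0, h1]

lemma hrow0 {n : ℕ} (A : Fin n → Fin n → ℕ) (i₀ i₁ j₀ j₁ : Fin n)
    (hii : i₀ ≠ i₁) (hjj : j₀ ≠ j₁) (hA00 : A i₀ j₀ = 1) (b : Fin n) :
    0 < switchM A i₀ i₁ j₀ j₁ i₀ b ↔ ((0 < A i₀ b ∧ b ≠ j₀) ∨ b = j₁) := by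
  by_cases h3 : b = j₀ <;> by_cases h4 : b = j₁ <;> simp_all [switchM, hii]

lemma hrow1 {n : ℕ} (A : Fin n → Fin n → ℕ) (i₀ i₁ j₀ j₁ : Fin n)
    (hii : i₀ ≠ i₁) (hjj : j₀ ≠ j₁) (hA11 : A i₁ j₁ = 1) (b : Fin n) :
    0 < switchM A i₀ i₁ j₀ j₁ i₁ b ↔ ((0 < A i₁ b ∧ b ≠ j₁) ∨ b = j₀) := by
  by_cases h3 : b = j₀ <;> by_cases h4 : b = j₁ <;> simp_all [switchM, hii, hii.symm]

lemma key {n : ℕ} (A : Fin n → Fin n → ℕ) (hAs : IsSimpleG A)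
    (i₀ i₁ j₀ j₁ : Fin n) (hii : i₀ ≠ i₁) (hjj : j₀ ≠ j₁)
    (h00 : 0 < A i₀ j₀) (h11 : 0 < A i₁ j₁)
    (hP : ¬ ∃ x k, 0 < A i₀ x ∧ 0 < A k x ∧ 0 < A k j₁)
    (hP' : ¬ ∃ x k, 0 < A i₁ x ∧ 0 < A k x ∧ 0 < A k j₀) :
    Zae (switchM A i₀ i₁ j₀ j₁) ≤ Zae A := by
  classical
  set B := switchM A i₀ i₁ j₀ j₁ with hBdef
  have hA00 : A i₀ j₀ = 1 := le_antisymm (hAs _ _) h00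
  have hA11 : A i₁ j₁ = 1 := le_antisymm (hAs _ _) h11
  have hr0 : ∀ b, 0 < B i₀ b ↔ ((0 < A i₀ b ∧ b ≠ j₀) ∨ b = j₁) :=
    hrow0 A i₀ i₁ j₀ j₁ hii hjj hA00
  have hr1 : ∀ b, 0 < B i₁ b ↔ ((0 < A i₁ b ∧ b ≠ j₁) ∨ b = j₀) :=
    hrow1 A i₀ i₁ j₀ j₁ hii hjj hA11
  have hro : ∀ a b, a ≠ i₀ → a ≠ i₁ → B a b = A a b :=
    fun a b h0 h1 => hrowo A i₀ i₁ j₀ j₁ a b h0 h1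
  have hQ : ∀ x k, 0 < A i₀ x → 0 < A k x → ¬ 0 < A k j₁ := by
    intro x k h1 h2 h3; exact hP ⟨x, k, h1, h2, h3⟩
  have hQ' : ∀ x k, 0 < A i₁ x → 0 < A k x → ¬ 0 < A k j₀ := by
    intro x k h1 h2 h3; exact hP' ⟨x, k, h1, h2, h3⟩
  apply Finset.card_le_card
  intro p hp
  simp only [Finset.mem_filter, Finset.mem_univ, true_and] at hp ⊢
  obtain ⟨hpB, k, hki, hkB, hcard⟩ := hp
  obtain ⟨i, j⟩ := p
  simp only at hpB hkB hki hcard ⊢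
  by_cases hi0 : i = i₀
  · subst hi0
    -- here i₀ has been replaced by i everywhere
    by_cases hk1 : k = i₁
    · subst hk1
      exfalso
      have hempty : (Finset.univ.filter fun x => 0 < B i x ∧ 0 < B k x) = ∅ := by
        apply Finset.filter_eq_empty_iff.2
        intro x _
        rintro ⟨h1, h2⟩
        rw [hr0] at h1; rw [hr1] at h2
        rcases h1 with ⟨ha, hb⟩ | rfl
        · rcases h2 with ⟨hc, hd⟩ | rfl
          · exact hQ x k ha hc h11
          · exact hb rfl
        · rcases h2 with ⟨hc, hd⟩ | h
          · exact hd rfl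
          · exact hjj h.symm
      rw [hempty] at hcard; simp at hcard
    · have hkrow : ∀ b, B k b = A k b := fun b => hro k b hki hk1
      by_cases hkj1 : 0 < A k j₁
      · exfalso
        have hsub : (Finset.univ.filter fun x => 0 < B i x ∧ 0 < B k x) ⊆ {j₁} := by
          intro x hx
          simp only [Finset.mem_filter, Finset.mem_univ, true_and] at hx
          obtain ⟨h1, h2⟩ := hx
          rw [hr0] at h1; rw [hkrow] at h2
          rcases h1 with ⟨ha, _⟩ | rfl
          · exact absurd hkj1 (hQ x k ha h2)
          · exact Finset.mem_singleton_self _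
        have := Finset.card_le_card hsub
        simp at this; omega
      · have hAkj1 : A k j₁ = 0 := by omega
        have hjne : j ≠ j₁ := by
          intro h; subst h; rw [hkrow] at hkB; omega
        have hij : 0 < A i j ∧ j ≠ j₀ := by
          rcases (hr0 j).1 hpB with h | h
          · exact h
          · exact absurd h hjne
        refine ⟨hij.1, k, hki, by rwa [hkrow] at hkB, ?_⟩
        refine le_trans hcard (Finset.card_le_card ?_)
        intro x hx
        simp only [Finset.mem_filter, Finset.mem_univ, true_and] at hx ⊢
        obtain ⟨h1, h2⟩ := hx
        rw [hr0] at h1; rw [hkrow] at h2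
        rcases h1 with ⟨ha, _⟩ | rfl
        · exact ⟨ha, h2⟩
        · omega
  · by_cases hi1 : i = i₁
    · subst hi1
      -- i₁ replaced by i
      by_cases hk0 : k = i₀
      · subst hk0
        exfalso
        have hempty : (Finset.univ.filter fun x => 0 < B i x ∧ 0 < B k x) = ∅ := by
          apply Finset.filter_eq_empty_iff.2
          intro x _
          rintro ⟨h2, h1⟩
          rw [hr0] at h1; rw [hr1] at h2
          rcases h1 with ⟨ha, hb⟩ | rfl
          · rcases h2 with ⟨hc, hd⟩ | rfl
            · exact hQ x i ha hc h11
            · exact hb rfl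
          · rcases h2 with ⟨hc, hd⟩ | h
            · exact hd rfl
            · exact hjj h.symm
        rw [hempty] at hcard; simp at hcard
      · have hkrow : ∀ b, B k b = A k b := fun b => hro k b hk0 hki
        by_cases hkj0 : 0 < A k j₀
        · exfalso
          have hsub : (Finset.univ.filter fun x => 0 < B i x ∧ 0 < B k x) ⊆ {j₀} := by
            intro x hx
            simp only [Finset.mem_filter, Finset.mem_univ, true_and] at hx
            obtain ⟨h1, h2⟩ := hx
            rw [hr1] at h1; rw [hkrow] at h2
            rcases h1 with ⟨ha, _⟩ | rfl
            · exact absurd hkj0 (hQ' x k ha h2)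
            · exact Finset.mem_singleton_self _
          have := Finset.card_le_card hsub
          simp at this; omega
        · have hAkj0 : A k j₀ = 0 := by omega
          have hjne : j ≠ j₀ := by
            intro h; subst h; rw [hkrow] at hkB; omega
          have hij : 0 < A i j ∧ j ≠ j₁ := by
            rcases (hr1 j).1 hpB with h | h
            · exact h
            · exact absurd h hjne
          refine ⟨hij.1, k, hki, by rwa [hkrow] at hkB, ?_⟩
          refine le_trans hcard (Finset.card_le_card ?_)
          intro x hx
          simp only [Finset.mem_filter, Finset.mem_univ, true_and] at hx ⊢
          obtain ⟨h1, h2⟩ := hx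
          rw [hr1] at h1; rw [hkrow] at h2
          rcases h1 with ⟨ha, _⟩ | rfl
          · exact ⟨ha, h2⟩
          · omega
    · -- i ∉ {i₀, i₁}
      have hirow : ∀ b, B i b = A i b := fun b => hro i b hi0 hi1
      by_cases hk0 : k = i₀
      · subst hk0
        -- i₀ replaced by k
        by_cases hij1 : 0 < A i j₁
        · exfalso
          obtain ⟨x, y, hx, hy, hxy⟩ := Finset.one_lt_card_iff.1 (by omega :
            1 < (Finset.univ.filter fun b => 0 < B i b ∧ 0 < B k b).card)
          simp only [Finset.mem_filter, Finset.mem_univ, true_and] at hx hy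
          have main : ∀ z, z ≠ j₁ → 0 < B i z ∧ 0 < B k z → False := by
            rintro z hz ⟨h1, h2⟩
            rw [hirow] at h1; rw [hr0] at h2
            rcases h2 with ⟨ha, _⟩ | rfl
            · exact hQ z i ha h1 hij1
            · exact hz rfl
          by_cases hxj : x = j₁
          · exact main y (fun h => hxy (by rw [hxj, h])) hy
          · exact main x hxj hx
        · have hAij1 : A i j₁ = 0 := by omega
          have hjne : j ≠ j₁ := by
            intro h; subst h; rw [hirow] at hpB; omega
          have h0j : 0 < A k j := by
            rcases (hr0 j).1 hkB with h | h
            · exact h.1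
            · exact absurd h hjne
          refine ⟨by rwa [hirow] at hpB, k, hki, h0j, ?_⟩
          refine le_trans hcard (Finset.card_le_card ?_)
          intro x hx
          simp only [Finset.mem_filter, Finset.mem_univ, true_and] at hx ⊢
          obtain ⟨h1, h2⟩ := hx
          rw [hirow] at h1; rw [hr0] at h2
          rcases h2 with ⟨ha, _⟩ | rfl
          · exact ⟨h1, ha⟩
          · omega
      · by_cases hk1 : k = i₁
        · subst hk1
          -- i₁ replaced by k
          by_cases hij0 : 0 < A i j₀
          · exfalso
            obtain ⟨x, y, hx, hy, hxy⟩ := Finset.one_lt_card_iff.1 (by omega :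
              1 < (Finset.univ.filter fun b => 0 < B i b ∧ 0 < B k b).card)
            simp only [Finset.mem_filter, Finset.mem_univ, true_and] at hx hy
            have main : ∀ z, z ≠ j₀ → 0 < B i z ∧ 0 < B k z → False := by
              rintro z hz ⟨h1, h2⟩
              rw [hirow] at h1; rw [hr1] at h2
              rcases h2 with ⟨ha, _⟩ | rfl
              · exact hQ' z i ha h1 hij0
              · exact hz rfl
            by_cases hxj : x = j₀
            · exact main y (fun h => hxy (by rw [hxj, h])) hy
            · exact main x hxj hx
          · have hAij0 : A i j₀ = 0 := by omega
            have hjne : j ≠ j₀ := by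
              intro h; subst h; rw [hirow] at hpB; omega
            have h1j : 0 < A k j := by
              rcases (hr1 j).1 hkB with h | h
              · exact h.1
              · exact absurd h hjne
            refine ⟨by rwa [hirow] at hpB, k, hki, h1j, ?_⟩
            refine le_trans hcard (Finset.card_le_card ?_)
            intro x hx
            simp only [Finset.mem_filter, Finset.mem_univ, true_and] at hx ⊢
            obtain ⟨h1, h2⟩ := hx
            rw [hirow] at h1; rw [hr1] at h2
            rcases h2 with ⟨ha, _⟩ | rfl
            · exact ⟨h1, ha⟩
            · omega
        · have hkrow : ∀ b, B k b = A k b := fun b => hro k b hk0 hk1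
          refine ⟨by rwa [hirow] at hpB, k, hki, by rwa [hkrow] at hkB, ?_⟩
          refine le_trans hcard (le_of_eq (congrArg Finset.card ?_))
          apply Finset.filter_congr
          intro x _
          rw [hirow, hkrow]

lemma count6 {n d : ℕ} (A : Fin n → Fin n → ℕ) (hAreg : IsReg n d A) :
    (Finset.univ.filter fun t : Fin n × Fin n × Fin n × Fin n × Fin n × Fin n =>
      0 < A t.1 t.2.1 ∧ 0 < A t.1 t.2.2.1 ∧ 0 < A t.2.2.2.1 t.2.2.1 ∧
        0 < A t.2.2.2.1 t.2.2.2.2.1 ∧ 0 < A t.2.2.2.2.2 t.2.2.2.2.1).card ≤ n * d ^ 5 := by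
  classical
  obtain ⟨hrow, hcol⟩ := hAreg
  have step1 : (Finset.univ.filter fun t : Fin n × Fin n × Fin n × Fin n × Fin n × Fin n =>
      0 < A t.1 t.2.1 ∧ 0 < A t.1 t.2.2.1 ∧ 0 < A t.2.2.2.1 t.2.2.1 ∧
        0 < A t.2.2.2.1 t.2.2.2.2.1 ∧ 0 < A t.2.2.2.2.2 t.2.2.2.2.1).card ≤
      ∑ t : Fin n × Fin n × Fin n × Fin n × Fin n × Fin n,
        A t.1 t.2.1 * (A t.1 t.2.2.1 * (A t.2.2.2.1 t.2.2.1 *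
          (A t.2.2.2.1 t.2.2.2.2.1 * A t.2.2.2.2.2 t.2.2.2.2.1))) := by
    rw [Finset.card_filter]
    apply Finset.sum_le_sum
    intro t _
    split_ifs with h
    · obtain ⟨h1, h2, h3, h4, h5⟩ := h
      have := Nat.mul_pos h1 (Nat.mul_pos h2 (Nat.mul_pos h3 (Nat.mul_pos h4 h5)))
      omega
    · exact Nat.zero_le _
  refine le_trans step1 (le_of_eq ?_)
  simp only [Fintype.sum_prod_type]
  simp only [← Finset.mul_sum, hcol]
  simp only [← Finset.sum_mul, hrow]
  simp only [← Finset.mul_sum, ← Finset.sum_mul, hrow, hcol]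
  simp only [Finset.sum_const, Finset.card_univ, Fintype.card_fin, smul_eq_mul]
  ring


/-- For every simple `d`-regular bipartite graph `G`, the number of adjacent
simple graphs `G'` with `Z(G') > Z(G)` is at most `n·d⁵`. -/
theorem stmt5 (n d : ℕ) (A : Fin n → Fin n → ℕ)
    (hAreg : IsReg n d A) (hAs : IsSimpleG A) :
    ({B | IsReg n d B ∧ IsSimpleG B ∧ AdjacentM A B ∧ Zae A < Zae B} :
        Set (Fin n → Fin n → ℕ)).ncard ≤ n * d ^ 5 := by
  classical
  set T6 := Finset.univ.filter (fun t : Fin n × Fin n × Fin n × Fin n × Fin n × Fin n =>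
      0 < A t.1 t.2.1 ∧ 0 < A t.1 t.2.2.1 ∧ 0 < A t.2.2.2.1 t.2.2.1 ∧
        0 < A t.2.2.2.1 t.2.2.2.2.1 ∧ 0 < A t.2.2.2.2.2 t.2.2.2.2.1) with hT6
  have hsub : ({B | IsReg n d B ∧ IsSimpleG B ∧ AdjacentM A B ∧ Zae A < Zae B} :
      Set (Fin n → Fin n → ℕ)) ⊆
      ↑(T6.image (fun t => switchM A t.1 t.2.2.2.2.2 t.2.1 t.2.2.2.2.1)) := by
    rintro B ⟨hBreg, hBs, ⟨i₀, i₁, j₀, j₁, hii, hjj, h00, h11, hBeq⟩, hZ⟩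
    simp only [Finset.coe_image, Set.mem_image, Finset.mem_coe, hT6, Finset.mem_filter,
      Finset.mem_univ, true_and]
    by_cases hP : ∃ x k, 0 < A i₀ x ∧ 0 < A k x ∧ 0 < A k j₁
    · obtain ⟨x, k, hx1, hx2, hx3⟩ := hP
      exact ⟨(i₀, j₀, x, k, j₁, i₁), ⟨h00, hx1, hx2, hx3, h11⟩, hBeq.symm⟩
    · by_cases hP' : ∃ x k, 0 < A i₁ x ∧ 0 < A k x ∧ 0 < A k j₀
      · obtain ⟨x, k, hx1, hx2, hx3⟩ := hP'
        refine ⟨(i₁, j₁, x, k, j₀, i₀), ⟨h11, hx1, hx2, hx3, h00⟩, ?_⟩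
        rw [hBeq]
        exact (switch_comm A i₀ i₁ j₀ j₁ hii hjj).symm
      · exfalso
        have hle := key A hAs i₀ i₁ j₀ j₁ hii hjj h00 h11 hP hP'
        rw [← hBeq] at hle
        omega
  calc ({B | IsReg n d B ∧ IsSimpleG B ∧ AdjacentM A B ∧ Zae A < Zae B} :
        Set (Fin n → Fin n → ℕ)).ncard
      ≤ (T6.image (fun t => switchM A t.1 t.2.2.2.2.2 t.2.1 t.2.2.2.2.1)).card := by
        rw [← Set.ncard_coe_finset]
        exact Set.ncard_le_ncard hsub (Finset.finite_toSet _)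
    _ ≤ T6.card := Finset.card_image_le
    _ ≤ n * d ^ 5 := count6 A hAreg
end

section
/- The uniform measure of the set of simple d-regular bipartite graphs with anti-expansion measure at most 𝔷 satisfies π_u(R_{n,d}(𝔷)) ≥ 1 − 4nd⁷ / ((𝔷 + 2 − 2d²)(nd − 2d⁴)). -/
open Finset

/-!
An edge counted by `Z(G)` lies in a rectangle of `G`: two rows `i ≠ k` and two columns
forming a 4-cycle. Hence `Z(G) ≤ d · #(rectangles of G)`, and it suffices to bound, for a fixed
4-cycle `C`, the number of `G ∈ Ω` containing `C`. Switchings do this one edge at a time: a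
graph containing `{e} ∪ S` can be switched along `e` and any of at least `nd - 2d² - |S|` other
edges into a graph containing `S`, and a graph containing `S` arises in at most `d²` ways from a
fixed `e`. So every prescribed edge costs a factor `d² / (nd - 2d² - 3) ≤ 2d / n`. Summing over
the at most `n⁴ / 2` rectangles gives `𝔼 Z ≤ 8 d⁵`, and Markov's inequality gives
`π_u(Z > 𝔷) ≤ 8 d⁵ / (𝔷 + 1)`, which is below the claimed bound as soon as `d ≥ 2`
(for `d = 1`, `Z` vanishes).
-/

namespace RegularBipartite

variable {n d : ℕ}

lemma card_filter_pos_eq_sum {α : Type*} (s : Finset α) {f : α → ℕ} (hf : ∀ x ∈ s, f x ≤ 1) :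
    #{x ∈ s | 0 < f x} = ∑ x ∈ s, f x := by
  rw [card_filter]
  exact sum_congr rfl fun x hx => by have := hf x hx; split_ifs <;> omega

section Switching

variable {A : Fin n → Fin n → ℕ} {i i' j j' : Fin n}

lemma le_switchM {a b : Fin n} (h : ¬(a = i ∧ b = j)) (h' : ¬(a = i' ∧ b = j')) :
    A a b ≤ switchM A i i' j j' a b := by
  unfold switchM; split_ifs <;> omega

lemma switchM_pos_left (hi : i ≠ i') (hj : j ≠ j') : 0 < switchM A i i' j j' i j' := by
  simp [switchM, hi, hj.symm]

lemma switchM_pos_right (hi : i ≠ i') (hj : j ≠ j') : 0 < switchM A i i' j j' i' j := by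
  simp [switchM, hi.symm, hj]

lemma switchM_add_ite (hi : i ≠ i') (hj : j ≠ j') (h : 0 < A i j) (h' : 0 < A i' j')
    (a b : Fin n) :
    switchM A i i' j j' a b +
        ((if a = i ∧ b = j then 1 else 0) + if a = i' ∧ b = j' then 1 else 0) =
      A a b + ((if a = i ∧ b = j' then 1 else 0) + if a = i' ∧ b = j then 1 else 0) := by
  unfold switchM
  split_ifs <;> grind

lemma isReg_switchM (hi : i ≠ i') (hj : j ≠ j') (h : 0 < A i j) (h' : 0 < A i' j')
    (hA : IsReg n d A) : IsReg n d (switchM A i i' j j') := by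
  have key := switchM_add_ite hi hj h h'
  refine ⟨fun a => ?_, fun b => ?_⟩
  · have hsum := sum_congr rfl fun b (_ : b ∈ univ) => key a b
    simp only [ite_and, sum_add_distrib, sum_ite_irrel, sum_ite_eq', mem_univ, ↓reduceIte,
      sum_const_zero, Nat.add_right_cancel_iff] at hsum
    rw [hsum, hA.1 a]
  · have hsum := sum_congr rfl fun a (_ : a ∈ univ) => key a b
    simp only [ite_and, sum_add_distrib, sum_ite_eq', mem_univ, ↓reduceIte] at hsum
    have := hA.2 b
    omega

lemma isSimpleG_switchM (hA : IsSimpleG A) (h : A i j' = 0) (h' : A i' j = 0) :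
    IsSimpleG (switchM A i i' j j') := by
  intro a b
  have := hA a b
  unfold switchM
  split_ifs <;> grind

lemma switchM_switchM (hi : i ≠ i') (hj : j ≠ j') (h : 0 < A i j) (h' : 0 < A i' j') :
    switchM (switchM A i i' j j') i i' j' j = A := by
  funext a b
  unfold switchM
  split_ifs <;> grind

end Switching

/-- `Ω^B_n(d)`, as a finset: simple matrices are the `0/1`-valued ones. -/
noncomputable def regular (n d : ℕ) : Finset (Fin n → Fin n → ℕ) :=
  open scoped Classical in
  ((univ : Finset (Fin n → Fin n → Fin 2)).image fun B i j => (B i j : ℕ)).filter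
    fun A => IsReg n d A ∧ IsSimpleG A

lemma mem_regular {A : Fin n → Fin n → ℕ} : A ∈ regular n d ↔ IsReg n d A ∧ IsSimpleG A := by
  classical
  refine ⟨fun h => (mem_filter.1 h).2, fun h => mem_filter.2 ⟨mem_image.2 ?_, h⟩⟩
  exact ⟨fun i j => ⟨A i j, Nat.lt_succ_of_le (h.2 i j)⟩, mem_univ _, rfl⟩

def support (A : Fin n → Fin n → ℕ) : Finset (Fin n × Fin n) :=
  {p | 0 < A p.1 p.2}

lemma mem_support {A : Fin n → Fin n → ℕ} {q : Fin n × Fin n} :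
    q ∈ support A ↔ 0 < A q.1 q.2 := by
  simp [support]

section Degrees

variable {A : Fin n → Fin n → ℕ} (hA : A ∈ regular n d)
include hA

lemma card_row (i : Fin n) : #{j | 0 < A i j} = d := by
  rw [card_filter_pos_eq_sum _ fun j _ => (mem_regular.1 hA).2 i j, (mem_regular.1 hA).1.1 i]

lemma card_col (j : Fin n) : #{i | 0 < A i j} = d := by
  rw [card_filter_pos_eq_sum _ fun i _ => (mem_regular.1 hA).2 i j, (mem_regular.1 hA).1.2 j]

lemma card_support : #(support A) = n * d := by
  rw [support, card_filter_pos_eq_sum _ fun p _ => (mem_regular.1 hA).2 p.1 p.2,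
    Fintype.sum_prod_type]
  simp [(mem_regular.1 hA).1.1]

lemma card_paths_from_row_le (i : Fin n) :
    #{p : Fin n × Fin n | 0 < A i p.2 ∧ 0 < A p.1 p.2} ≤ d ^ 2 := by
  calc _ ≤ #(({j | 0 < A i j} : Finset (Fin n)).biUnion
        fun j => ({a | 0 < A a j} : Finset (Fin n)) ×ˢ {j}) := by
        refine card_le_card fun p hp => ?_
        simp only [mem_filter, mem_univ, true_and] at hp
        simp only [mem_biUnion, mem_filter, mem_product, mem_singleton, mem_univ, true_and]
        exact ⟨p.2, hp.1, hp.2, rfl⟩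
    _ ≤ #{j | 0 < A i j} * d := card_biUnion_le_card_mul _ _ _ fun j _ => by
        rw [card_product, card_singleton, mul_one, card_col hA]
    _ = d ^ 2 := by rw [card_row hA, sq]

lemma card_paths_from_col_le (j : Fin n) :
    #{p : Fin n × Fin n | 0 < A p.1 j ∧ 0 < A p.1 p.2} ≤ d ^ 2 := by
  calc _ ≤ #(({a | 0 < A a j} : Finset (Fin n)).biUnion
        fun a => {a} ×ˢ ({b | 0 < A a b} : Finset (Fin n))) := by
        refine card_le_card fun p hp => ?_
        simp only [mem_filter, mem_univ, true_and] at hp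
        simp only [mem_biUnion, mem_filter, mem_product, mem_singleton, mem_univ, true_and]
        exact ⟨p.1, hp.1, rfl, hp.2⟩
    _ ≤ #{a | 0 < A a j} * d := card_biUnion_le_card_mul _ _ _ fun a _ => by
        rw [card_product, card_singleton, one_mul, card_row hA]
    _ = d ^ 2 := by rw [card_col hA, sq]

end Degrees

noncomputable def withEdges (n d : ℕ) (S : Finset (Fin n × Fin n)) :
    Finset (Fin n → Fin n → ℕ) :=
  {A ∈ regular n d | S ⊆ support A}

lemma card_switchable_ge {A : Fin n → Fin n → ℕ} (hA : A ∈ regular n d)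
    (e : Fin n × Fin n) (S : Finset (Fin n × Fin n)) :
    n * d - (2 * d ^ 2 + #S) ≤
      #{p : Fin n × Fin n | 0 < A p.1 p.2 ∧ A e.1 p.2 = 0 ∧ A p.1 e.2 = 0 ∧ p ∉ S} := by
  set good : Finset (Fin n × Fin n) :=
    {p | 0 < A p.1 p.2 ∧ A e.1 p.2 = 0 ∧ A p.1 e.2 = 0 ∧ p ∉ S}
  set rowPaths : Finset (Fin n × Fin n) := {p | 0 < A e.1 p.2 ∧ 0 < A p.1 p.2}
  set colPaths : Finset (Fin n × Fin n) := {p | 0 < A p.1 e.2 ∧ 0 < A p.1 p.2}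
  have hcover : support A ⊆ good ∪ rowPaths ∪ colPaths ∪ S := by
    intro p hp
    simp only [support, good, rowPaths, colPaths, mem_union, mem_filter, mem_univ,
      true_and] at hp ⊢
    by_cases hS : p ∈ S
    · exact Or.inr hS
    · simp only [hS, not_false_eq_true, and_true, or_false]
      omega
  have := card_le_card hcover
  have := card_union_le (good ∪ rowPaths ∪ colPaths) S
  have := card_union_le (good ∪ rowPaths) colPaths
  have := card_union_le good rowPaths
  have : #rowPaths ≤ d ^ 2 := card_paths_from_row_le hA e.1
  have : #colPaths ≤ d ^ 2 := card_paths_from_col_le hA e.2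
  have := card_support hA
  omega

section SwitchingCount

variable {e p : Fin n × Fin n} {S : Finset (Fin n × Fin n)} {A : Fin n → Fin n → ℕ}

lemma ne_and_ne_of_pos_of_eq_zero (hAe : 0 < A e.1 e.2) (hep : A e.1 p.2 = 0)
    (hpe : A p.1 e.2 = 0) : e.1 ≠ p.1 ∧ e.2 ≠ p.2 :=
  ⟨fun h => by rw [h] at hAe; omega, fun h => by rw [h] at hAe; omega⟩

lemma switchM_mem_withEdges (he : e ∉ S) (hA : A ∈ withEdges n d (insert e S))
    (hp : 0 < A p.1 p.2 ∧ A e.1 p.2 = 0 ∧ A p.1 e.2 = 0 ∧ p ∉ S) :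
    switchM A e.1 p.1 e.2 p.2 ∈ withEdges n d S ∧
      0 < switchM A e.1 p.1 e.2 p.2 p.1 e.2 ∧ 0 < switchM A e.1 p.1 e.2 p.2 e.1 p.2 := by
  obtain ⟨hreg, hS⟩ := mem_filter.1 hA
  obtain ⟨hpA, hep, hpe, hpS⟩ := hp
  have hAe : 0 < A e.1 e.2 := mem_support.1 (hS (mem_insert_self e S))
  obtain ⟨hi, hj⟩ := ne_and_ne_of_pos_of_eq_zero hAe hep hpe
  refine ⟨mem_filter.2 ⟨mem_regular.2 ⟨isReg_switchM hi hj hAe hpA (mem_regular.1 hreg).1,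
    isSimpleG_switchM (mem_regular.1 hreg).2 hep hpe⟩, fun q hq => ?_⟩,
    switchM_pos_right hi hj, switchM_pos_left hi hj⟩
  have hqe : q ≠ e := fun h => he (h ▸ hq)
  have hqp : q ≠ p := fun h => hpS (h ▸ hq)
  exact mem_support.2 <| (mem_support.1 (hS (mem_insert_of_mem hq))).trans_le <|
    le_switchM (fun h => hqe (Prod.ext h.1 h.2)) (fun h => hqp (Prod.ext h.1 h.2))

lemma card_withEdges_insert_mul_le (he : e ∉ S) :
    #(withEdges n d (insert e S)) * (n * d - (2 * d ^ 2 + #S)) ≤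
      #(withEdges n d S) * d ^ 2 := by
  classical
  set X := withEdges n d (insert e S)
  set Y := withEdges n d S
  let switchable (A : Fin n → Fin n → ℕ) (p : Fin n × Fin n) : Prop :=
    0 < A p.1 p.2 ∧ A e.1 p.2 = 0 ∧ A p.1 e.2 = 0 ∧ p ∉ S
  let hit (B : Fin n → Fin n → ℕ) (p : Fin n × Fin n) : Prop := 0 < B p.1 e.2 ∧ 0 < B e.1 p.2
  have hmaps (p : Fin n × Fin n) : Set.MapsTo (fun A => switchM A e.1 p.1 e.2 p.2)
      (X.bipartiteBelow switchable p) (Y.bipartiteBelow hit p) := by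
    intro A hA
    obtain ⟨hAX, hp⟩ := mem_filter.1 hA
    obtain ⟨hY, hpos⟩ := switchM_mem_withEdges he hAX hp
    exact mem_filter.2 ⟨hY, hpos⟩
  have hinj (p : Fin n × Fin n) : Set.InjOn (fun A => switchM A e.1 p.1 e.2 p.2)
      (X.bipartiteBelow switchable p) := by
    have hinv {A} (hA : A ∈ X.bipartiteBelow switchable p) :
        switchM (switchM A e.1 p.1 e.2 p.2) e.1 p.1 p.2 e.2 = A := by
      obtain ⟨hAX, hpA, hep, hpe, -⟩ := mem_filter.1 hA
      have hAe : 0 < A e.1 e.2 := mem_support.1 ((mem_filter.1 hAX).2 (mem_insert_self e S))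
      obtain ⟨hi, hj⟩ := ne_and_ne_of_pos_of_eq_zero hAe hep hpe
      exact switchM_switchM hi hj hAe hpA
    intro A hA A' hA' h
    rw [← hinv hA, ← hinv hA']
    exact congrArg (switchM · e.1 p.1 p.2 e.2) h
  have hhit {B} (hB : B ∈ Y) : #(univ.bipartiteAbove hit B) = d ^ 2 := by
    have hreg := (mem_filter.1 hB).1
    have : univ.bipartiteAbove hit B =
        ({a | 0 < B a e.2} : Finset (Fin n)) ×ˢ ({b | 0 < B e.1 b} : Finset (Fin n)) := by
      ext; simp [bipartiteAbove, hit]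
    rw [this, card_product, card_col hreg, card_row hreg, sq]
  -- Double count pairs `(A, p)`: switching back along `p` recovers `A`.
  calc #X * (n * d - (2 * d ^ 2 + #S))
      ≤ ∑ A ∈ X, #(univ.bipartiteAbove switchable A) := by
        rw [← smul_eq_mul]
        exact card_nsmul_le_sum _ _ _ fun A hA => card_switchable_ge (mem_filter.1 hA).1 e S
    _ = ∑ p, #(X.bipartiteBelow switchable p) :=
        sum_card_bipartiteAbove_eq_sum_card_bipartiteBelow _
    _ ≤ ∑ p, #(Y.bipartiteBelow hit p) :=
        sum_le_sum fun p _ => card_le_card_of_injOn _ (hmaps p) (hinj p)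
    _ = ∑ B ∈ Y, #(univ.bipartiteAbove hit B) :=
        (sum_card_bipartiteAbove_eq_sum_card_bipartiteBelow _).symm
    _ = #Y * d ^ 2 := by rw [sum_congr rfl fun B hB => hhit hB, sum_const, smul_eq_mul]

end SwitchingCount

lemma card_withEdges_mul_pow_le (k : ℕ) (S : Finset (Fin n × Fin n)) (hS : #S ≤ k + 1) :
    #(withEdges n d S) * (n * d - (2 * d ^ 2 + k)) ^ #S ≤ (d ^ 2) ^ #S * #(regular n d) := by
  classical
  induction S using Finset.induction_on with
  | empty => simp [withEdges]
  | insert e S he ih =>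
    rw [card_insert_of_notMem he] at hS ⊢
    set m := n * d - (2 * d ^ 2 + k)
    have hm : m ≤ n * d - (2 * d ^ 2 + #S) := by omega
    calc #(withEdges n d (insert e S)) * m ^ (#S + 1)
        = #(withEdges n d (insert e S)) * m * m ^ #S := by ring
      _ ≤ #(withEdges n d S) * d ^ 2 * m ^ #S :=
        Nat.mul_le_mul_right _ ((Nat.mul_le_mul_left _ hm).trans (card_withEdges_insert_mul_le he))
      _ = d ^ 2 * (#(withEdges n d S) * m ^ #S) := by ring
      _ ≤ d ^ 2 * ((d ^ 2) ^ #S * #(regular n d)) := Nat.mul_le_mul_left _ (ih (by omega))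
      _ = (d ^ 2) ^ (#S + 1) * #(regular n d) := by ring

/-- A rectangle `((i, k), s)`: two distinct rows `i ≠ k` and a pair `s` of columns. -/
def rectangles (n : ℕ) : Finset ((Fin n × Fin n) × Finset (Fin n)) :=
  univ.offDiag ×ˢ powersetCard 2 univ

def rectangle (c : (Fin n × Fin n) × Finset (Fin n)) : Finset (Fin n × Fin n) :=
  {c.1.1, c.1.2} ×ˢ c.2

lemma card_rectangle {c : (Fin n × Fin n) × Finset (Fin n)} (hc : c ∈ rectangles n) :
    #(rectangle c) = 4 := by
  obtain ⟨hq, hs⟩ := mem_product.1 hc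
  rw [rectangle, card_product, card_pair (mem_offDiag.1 hq).2.2, (mem_powersetCard.1 hs).2]

lemma two_mul_card_rectangles_le : 2 * #(rectangles n) ≤ n ^ 4 := by
  have hchoose : 2 * n.choose 2 ≤ n * n := by
    rw [Nat.choose_two_right, mul_comm]
    exact (Nat.div_mul_le_self _ 2).trans (Nat.mul_le_mul_left n (Nat.sub_le n 1))
  rw [rectangles, card_product, offDiag_card, card_powersetCard, card_univ, Fintype.card_fin]
  calc 2 * ((n * n - n) * n.choose 2) = (n * n - n) * (2 * n.choose 2) := by ring
    _ ≤ (n * n) * (n * n) := by gcongr; exact Nat.sub_le _ _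
    _ = n ^ 4 := by ring

lemma zae_le_card_rectangles_mul {A : Fin n → Fin n → ℕ} (hA : A ∈ regular n d) :
    Zae A ≤ #{c ∈ rectangles n | rectangle c ⊆ support A} * d := by
  classical
  calc Zae A ≤ #({c ∈ rectangles n | rectangle c ⊆ support A}.biUnion
        fun c => {c.1.1} ×ˢ ({j | 0 < A c.1.2 j} : Finset (Fin n))) := card_le_card ?_
    _ ≤ _ := card_biUnion_le_card_mul _ _ _ fun c _ => by
        rw [card_product, card_singleton, one_mul, card_row hA]
  intro p hp
  obtain ⟨hpos, k, hk, hkpos, hcommon⟩ := (mem_filter.1 hp).2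
  obtain ⟨s, hs, hs2⟩ := exists_subset_card_eq hcommon
  refine mem_biUnion.2 ⟨((p.1, k), s), mem_filter.2 ⟨?_, fun x hx => ?_⟩, ?_⟩
  · exact mem_product.2 ⟨mem_offDiag.2 ⟨mem_univ _, mem_univ _, hk.symm⟩,
      mem_powersetCard.2 ⟨subset_univ s, hs2⟩⟩
  · obtain ⟨hx1, hx2⟩ := mem_product.1 hx
    obtain ⟨-, hp1, hk1⟩ := mem_filter.1 (hs hx2)
    rcases mem_insert.1 hx1 with h | h
    · exact mem_support.2 (h ▸ hp1)
    · exact mem_support.2 ((mem_singleton.1 h) ▸ hk1)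
  · exact mem_product.2 ⟨mem_singleton_self _, mem_filter.2 ⟨mem_univ _, hkpos⟩⟩

lemma sum_zae_mul_pow_le :
    (∑ A ∈ regular n d, Zae A) * (n * d - (2 * d ^ 2 + 3)) ^ 4 ≤
      d ^ 9 * #(rectangles n) * #(regular n d) := by
  classical
  set m := n * d - (2 * d ^ 2 + 3)
  calc (∑ A ∈ regular n d, Zae A) * m ^ 4
      ≤ (∑ A ∈ regular n d, #{c ∈ rectangles n | rectangle c ⊆ support A} * d) * m ^ 4 := by
        gcongr with A hA
        exact zae_le_card_rectangles_mul hA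
    _ = d * ∑ c ∈ rectangles n, #(withEdges n d (rectangle c)) * m ^ 4 := by
        have hswap : ∑ A ∈ regular n d, #{c ∈ rectangles n | rectangle c ⊆ support A} =
            ∑ c ∈ rectangles n, #(withEdges n d (rectangle c)) :=
          sum_card_bipartiteAbove_eq_sum_card_bipartiteBelow fun A c => rectangle c ⊆ support A
        rw [← sum_mul, hswap, ← sum_mul]
        ring
    _ ≤ d * ∑ c ∈ rectangles n, (d ^ 2) ^ 4 * #(regular n d) := by
        refine Nat.mul_le_mul_left _ (sum_le_sum fun c hc => ?_)
        have := card_withEdges_mul_pow_le (d := d) 3 (rectangle c) (card_rectangle hc).le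
        rwa [card_rectangle hc] at this
    _ = d ^ 9 * #(rectangles n) * #(regular n d) := by rw [sum_const, smul_eq_mul]; ring

lemma zae_eq_zero_of_le_one {A : Fin n → Fin n → ℕ} (hA : A ∈ regular n d) (hd : d ≤ 1) :
    Zae A = 0 := by
  refine card_eq_zero.2 (filter_false_of_mem fun p _ ⟨hpos, k, hk, hkpos, _⟩ => ?_)
  have h2 : 1 < #{i | 0 < A i p.2} :=
    one_lt_card.2 ⟨p.1, mem_filter.2 ⟨mem_univ _, hpos⟩, k, mem_filter.2 ⟨mem_univ _, hkpos⟩,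
      hk.symm⟩
  have := card_col hA p.2
  omega

lemma card_zae_gt_mul_le_sum (z : ℕ) :
    #{A ∈ regular n d | z < Zae A} * (z + 1) ≤ ∑ A ∈ regular n d, Zae A := by
  rw [← smul_eq_mul]
  exact (card_nsmul_le_sum _ _ _ fun A hA => (mem_filter.1 hA).2).trans
    (sum_le_sum_of_subset (filter_subset _ _))

lemma card_zae_gt_le (z : ℕ) (hnd : 2 * d ^ 4 < n * d) :
    (z + 1) * #{A ∈ regular n d | z < Zae A} ≤ 4 * d ^ 6 * #(regular n d) := by
  rcases le_or_gt d 1 with hd | hd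
  · rw [filter_false_of_mem fun A hA => by simp [zae_eq_zero_of_le_one hA hd]]
    simp
  set m := n * d - (2 * d ^ 2 + 3)
  set B := #{A ∈ regular n d | z < Zae A}
  have hm : n * d ≤ 2 * m := by
    have h4 : 4 ≤ d ^ 2 := by nlinarith
    have : 2 * (2 * d ^ 2 + 3) < 2 * d ^ 4 := by nlinarith
    omega
  have : (z + 1) * B * (n * d) ^ 4 ≤ 8 * d ^ 5 * #(regular n d) * (n * d) ^ 4 :=
    calc (z + 1) * B * (n * d) ^ 4 ≤ (z + 1) * B * (2 * m) ^ 4 := by gcongr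
      _ = 16 * (B * (z + 1) * m ^ 4) := by ring
      _ ≤ 16 * ((∑ A ∈ regular n d, Zae A) * m ^ 4) :=
        Nat.mul_le_mul_left _ (Nat.mul_le_mul_right _ (card_zae_gt_mul_le_sum z))
      _ ≤ 16 * (d ^ 9 * #(rectangles n) * #(regular n d)) :=
        Nat.mul_le_mul_left _ sum_zae_mul_pow_le
      _ = 8 * d ^ 9 * (2 * #(rectangles n)) * #(regular n d) := by ring
      _ ≤ 8 * d ^ 9 * n ^ 4 * #(regular n d) := by gcongr; exact two_mul_card_rectangles_le
      _ = 8 * d ^ 5 * #(regular n d) * (n * d) ^ 4 := by ring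
  calc (z + 1) * B ≤ 8 * d ^ 5 * #(regular n d) :=
        Nat.le_of_mul_le_mul_right this (pow_pos (by omega) 4)
    _ ≤ 4 * d ^ 6 * #(regular n d) := by
        rw [show 4 * d ^ 6 = 4 * d * d ^ 5 by ring]; gcongr; omega

lemma regular_nonempty (hdn : d ≤ n) : (regular n d).Nonempty := by
  rcases n with _ | n
  · exact ⟨fun i => i.elim0, mem_regular.2 ⟨⟨fun i => i.elim0, fun j => j.elim0⟩, fun i => i.elim0⟩⟩
  have hsum : ∑ j : Fin (n + 1), (if (j : ℕ) < d then 1 else 0) = d := by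
    rw [← card_filter, Fin.card_filter_val_lt, min_eq_right hdn]
  refine ⟨fun i j => if ((j - i : Fin (n + 1)) : ℕ) < d then 1 else 0,
    mem_regular.2 ⟨⟨fun i => ?_, fun j => ?_⟩, fun i j => by dsimp only; split_ifs <;> omega⟩⟩
  · exact ((Equiv.subRight i).sum_comp _).trans hsum
  · exact ((Equiv.subLeft j).sum_comp _).trans hsum

end RegularBipartite

lemma one_sub_div_le_div_of_mul_le {N B z d n : ℝ} (hN : 0 < N) (hB : 0 ≤ B) (hd : 1 ≤ d)
    (hBN : (z + 1) * B ≤ 4 * d ^ 6 * N) (h₁ : 0 < z + 2 - 2 * d ^ 2)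
    (h₂ : 0 < n * d - 2 * d ^ 4) :
    1 - 4 * n * d ^ 7 / ((z + 2 - 2 * d ^ 2) * (n * d - 2 * d ^ 4)) ≤ (N - B) / N := by
  have hP : (z + 2 - 2 * d ^ 2) * (n * d - 2 * d ^ 4) ≤ (z + 1) * (n * d) :=
    mul_le_mul (by nlinarith) (by nlinarith) h₂.le (by nlinarith)
  rw [sub_div, div_self hN.ne', sub_le_sub_iff_left, div_le_div_iff₀ hN (mul_pos h₁ h₂)]
  calc B * ((z + 2 - 2 * d ^ 2) * (n * d - 2 * d ^ 4)) ≤ B * ((z + 1) * (n * d)) := by gcongr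
    _ = (z + 1) * B * (n * d) := by ring
    _ ≤ 4 * d ^ 6 * N * (n * d) := by gcongr; nlinarith
    _ = 4 * n * d ^ 7 * N := by ring

open RegularBipartite

/-- The uniform measure of the set of simple `d`-regular bipartite graphs
with anti-expansion measure at most `𝔷` satisfies
`π_u(R_{n,d}(𝔷)) ≥ 1 − 4nd⁷ / ((𝔷 + 2 − 2d²)(nd − 2d⁴))`. -/
theorem stmt6 (n d z : ℕ)
    (hpos₁ : (0 : ℝ) < (z : ℝ) + 2 - 2 * (d : ℝ) ^ 2)
    (hpos₂ : (0 : ℝ) < (n : ℝ) * d - 2 * (d : ℝ) ^ 4) :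
    1 - 4 * (n : ℝ) * (d : ℝ) ^ 7 /
        (((z : ℝ) + 2 - 2 * (d : ℝ) ^ 2) * ((n : ℝ) * d - 2 * (d : ℝ) ^ 4)) ≤
      (({A | IsReg n d A ∧ IsSimpleG A ∧ Zae A ≤ z} :
          Set (Fin n → Fin n → ℕ)).ncard : ℝ) /
      (({A | IsReg n d A ∧ IsSimpleG A} : Set (Fin n → Fin n → ℕ)).ncard : ℝ) := by
  have hnd : 2 * d ^ 4 < n * d := by exact_mod_cast (sub_pos.1 hpos₂)
  have hd : 1 ≤ d := Nat.pos_of_ne_zero fun h => by simp [h] at hnd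
  have hdn : d ≤ n := (Nat.lt_of_mul_lt_mul_right (a := d)
    (by nlinarith [Nat.pow_le_pow_right hd (show 2 ≤ 4 by norm_num)])).le
  have hΩ : {A | IsReg n d A ∧ IsSimpleG A} = (regular n d : Set (Fin n → Fin n → ℕ)) := by
    ext A; simp [mem_regular]
  have hR : {A | IsReg n d A ∧ IsSimpleG A ∧ Zae A ≤ z} =
      (((regular n d).filter fun A => ¬z < Zae A : Finset _) : Set (Fin n → Fin n → ℕ)) := by
    ext A; simp [mem_regular, and_assoc]
  have hsplit := card_filter_add_card_filter_not (s := regular n d) (fun A => z < Zae A)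
  rw [hΩ, hR, Set.ncard_coe_finset, Set.ncard_coe_finset,
    show (#{A ∈ regular n d | ¬z < Zae A} : ℝ) = #(regular n d) - #{A ∈ regular n d | z < Zae A}
      by rw [← hsplit]; push_cast; ring]
  exact one_sub_div_le_div_of_mul_le (by exact_mod_cast (regular_nonempty hdn).card_pos)
    (Nat.cast_nonneg _) (by exact_mod_cast hd) (by exact_mod_cast card_zae_gt_le z hnd)
    hpos₁ hpos₂
end

section
/- For every simple d-regular bipartite graph G on [n]⊔[n] and every 1 ≤ k ≤ 𝔪, the number of multigraphs G' ∈ Cat_{n,d}(k) with G ∈ SN(G') is at least ((nd − Z(G) − 2kd³)^k / k!) · (d−1)^{2k} and at most C(nd, k) · (d−1)^{2k}, where C(nd,k) is the binomial coefficient. -/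
open Finset

/-!
Both bounds compare the multigraphs `G'` with `G ∈ SN(G')` to families of switchings of `G`.
Upper bound: such a `G'` is recovered from `G`, its `k` multiedges (a `k`-subset of the `nd`
edges of `G`) and, for each multiedge `(i, j)`, the auxiliary edge `(i', j')` of its switching,
where `i' ∈ N(j) \ {i}` and `j' ∈ N(i) \ {j}`: at most `C(nd, k) (d-1)^{2k}` choices.
Lower bound: undoing `k` pairwise vertex-disjoint switchings `⟨i, i', j, j'⟩` of `G` whose edge
`(i, j)` lies in no 4-cycle yields distinct `G' ∈ Cat_{n,d}(k)` with `G ∈ SN(G')`. There are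
`(nd - Z(G)) (d-1)^2` such switchings and each meets at most `8 d (d-1)^2 ≤ 2 d³ (d-1)^2` others
in a vertex, so a greedy double count gives at least
`((nd - Z(G) - 2kd³) (d-1)^2)^k / k!` families.
-/

open scoped Nat

section Greedy

variable {α : Type*} [DecidableEq α]

def pairwiseSubsets (Q : Finset α) (C : α → α → Prop) [DecidableRel C] (m : ℕ) :
    Finset (Finset α) :=
  (Q.powersetCard m).filter fun S => (S : Set α).Pairwise C

variable {Q : Finset α} {C : α → α → Prop} [DecidableRel C] [Std.Symm C] {B : ℕ}

lemma card_sub_le_card_filter_forall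
    (hB : ∀ a ∈ Q, #(Q.filter fun b => ¬ C a b) ≤ B) {S : Finset α} (hS : S ⊆ Q) :
    #Q - #S * B ≤ #(Q.filter fun a => ∀ b ∈ S, C a b) := by
  have hbad : #(Q.filter fun a => ¬ ∀ b ∈ S, C a b) ≤ #S * B := by
    refine (card_le_card fun a ha => ?_).trans
      (card_biUnion_le_card_mul S (fun b => Q.filter fun a => ¬ C b a) B fun b hb => hB b (hS hb))
    simp only [mem_filter, not_forall] at ha
    obtain ⟨haQ, b, hb, hba⟩ := ha
    exact mem_biUnion.2 ⟨b, hb, mem_filter.2 ⟨haQ, fun h => hba (Std.Symm.symm _ _ h)⟩⟩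
  have := card_filter_add_card_filter_not (s := Q) (fun a => ∀ b ∈ S, C a b)
  omega

/-- Double counting of pairs `S ⊂ S'` of pairwise related subsets of sizes `m` and `m + 1`:
every `S` extends by each of at least `#Q - m * B` elements, every `S'` has `m + 1` subsets. -/
lemma card_pairwiseSubsets_mul_le [Std.Irrefl C]
    (hB : ∀ a ∈ Q, #(Q.filter fun b => ¬ C a b) ≤ B) (m : ℕ) :
    #(pairwiseSubsets Q C m) * (#Q - m * B) ≤ #(pairwiseSubsets Q C (m + 1)) * (m + 1) := by
  refine card_mul_le_card_mul (· ⊆ ·) (fun S hS => ?_) (fun S' hS' => ?_)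
  · simp only [pairwiseSubsets, mem_filter, mem_powersetCard] at hS
    obtain ⟨⟨hSQ, hSm⟩, hSC⟩ := hS
    refine hSm ▸ (card_sub_le_card_filter_forall hB hSQ).trans
      (card_le_card_of_injOn (insert · S) (fun a ha => ?_) fun a ha a' ha' h => ?_)
    · simp only [coe_filter, Set.mem_ofPred_eq] at ha
      have haS : a ∉ S := fun h => Std.Irrefl.irrefl a (ha.2 a h)
      simp only [coe_bipartiteAbove, pairwiseSubsets, mem_filter, mem_powersetCard,
        Set.mem_ofPred_eq, coe_insert]
      refine ⟨⟨⟨insert_subset ha.1 hSQ, by rw [card_insert_of_notMem haS, hSm]⟩,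
        Set.pairwise_insert_of_symm.2 ⟨hSC, fun b hb _ => ha.2 b hb⟩⟩,
        subset_insert a S⟩
    · simp only [coe_filter, Set.mem_ofPred_eq] at ha ha'
      have haS : a ∉ S := fun h => Std.Irrefl.irrefl a (ha.2 a h)
      have h' : insert a S = insert a' S := h
      have : a ∈ insert a' S := h' ▸ mem_insert_self a S
      exact (mem_insert.1 this).resolve_right haS
  · simp only [pairwiseSubsets, mem_filter, mem_powersetCard] at hS'
    calc #(bipartiteBelow (· ⊆ ·) (pairwiseSubsets Q C m) S')
        ≤ #(S'.powersetCard m) := card_le_card fun S hS => by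
          simp only [mem_bipartiteBelow, pairwiseSubsets, mem_filter, mem_powersetCard] at hS
          exact mem_powersetCard.2 ⟨hS.2, hS.1.1.2⟩
      _ = m + 1 := by rw [card_powersetCard, hS'.1.2, Nat.choose_succ_self_right]

theorem pow_le_factorial_mul_card_pairwiseSubsets [Std.Irrefl C]
    (hB : ∀ a ∈ Q, #(Q.filter fun b => ¬ C a b) ≤ B) (k : ℕ) :
    (#Q - k * B) ^ k ≤ k ! * #(pairwiseSubsets Q C k) := by
  induction k with
  | zero => simp [pairwiseSubsets, filter_singleton]
  | succ m ih =>
    have hmono : #Q - (m + 1) * B ≤ #Q - m * B := Nat.sub_le_sub_left (by nlinarith) _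
    calc (#Q - (m + 1) * B) ^ (m + 1) = (#Q - (m + 1) * B) ^ m * (#Q - (m + 1) * B) := pow_succ _ _
      _ ≤ m ! * #(pairwiseSubsets Q C m) * (#Q - m * B) :=
          Nat.mul_le_mul ((Nat.pow_le_pow_left hmono m).trans ih) hmono
      _ ≤ m ! * (#(pairwiseSubsets Q C (m + 1)) * (m + 1)) := by
          rw [mul_assoc]; exact Nat.mul_le_mul_left _ (card_pairwiseSubsets_mul_le hB m)
      _ = (m + 1) ! * #(pairwiseSubsets Q C (m + 1)) := by rw [Nat.factorial_succ]; ring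

end Greedy

section ProductCounting

lemma card_le_mul_mul_of_forall_exists {α β γ δ : Type*} [DecidableEq δ] {s : Finset δ}
    {X : Finset α} {Y : α → Finset β} {Z : α → β → Finset γ} {g : α → β → γ → δ} {x y z : ℕ}
    (hX : #X ≤ x) (hY : ∀ a ∈ X, #(Y a) ≤ y) (hZ : ∀ a ∈ X, ∀ b ∈ Y a, #(Z a b) ≤ z)
    (hs : ∀ t ∈ s, ∃ a ∈ X, ∃ b ∈ Y a, ∃ c ∈ Z a b, g a b c = t) : #s ≤ x * (y * z) := by
  classical
  have hsub : s ⊆ X.biUnion fun a => (Y a).biUnion fun b => (Z a b).image (g a b) := by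
    intro t ht
    obtain ⟨a, ha, b, hb, c, hc, rfl⟩ := hs t ht
    exact mem_biUnion.2 ⟨a, ha, mem_biUnion.2 ⟨b, hb, mem_image_of_mem _ hc⟩⟩
  refine (card_le_card hsub).trans ((card_biUnion_le_card_mul _ _ _ fun a ha => ?_).trans
    (Nat.mul_le_mul_right _ hX))
  exact (card_biUnion_le_card_mul _ _ _ fun b hb => card_image_le.trans (hZ a ha b hb)).trans
    (Nat.mul_le_mul_right _ (hY a ha))

variable {ι : Type*} [Fintype ι] [DecidableEq ι]

def partialChoices (E : Finset ι) (C : ι → Finset ι) (k : ℕ) : Finset (Finset ι × (ι → ι)) :=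
  (E.powersetCard k).biUnion fun M =>
    {M} ×ˢ Fintype.piFinset fun e => if e ∈ M then C e else {e}

lemma card_partialChoices_le {E : Finset ι} {C : ι → Finset ι} {c : ℕ}
    (hC : ∀ e ∈ E, #(C e) ≤ c) (k : ℕ) :
    #(partialChoices E C k) ≤ (#E).choose k * c ^ k := by
  rw [← card_powersetCard]
  refine card_biUnion_le_card_mul _ _ _ fun M hM => ?_
  obtain ⟨hME, rfl⟩ := mem_powersetCard.1 hM
  rw [card_product, card_singleton, one_mul, Fintype.card_piFinset]
  calc ∏ e, #(if e ∈ M then C e else {e}) = ∏ e ∈ M, #(C e) := by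
        simp only [apply_ite card, card_singleton, prod_ite_mem, univ_inter]
    _ ≤ c ^ #M := prod_le_pow_card _ _ _ fun e he => hC e (hME he)

end ProductCounting

section Degrees

variable {n d : ℕ} {A : Fin n → Fin n → ℕ}

def nbrs (A : Fin n → Fin n → ℕ) (i : Fin n) : Finset (Fin n) :=
  univ.filter fun j => 0 < A i j

def edges (A : Fin n → Fin n → ℕ) : Finset (Fin n × Fin n) :=
  univ.filter fun e => 0 < A e.1 e.2

@[simp] lemma mem_nbrs {i j : Fin n} : j ∈ nbrs A i ↔ 0 < A i j := by simp [nbrs]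

lemma IsReg.swap (h : IsReg n d A) : IsReg n d (Function.swap A) := ⟨h.2, h.1⟩

lemma IsSimpleG.swap (h : IsSimpleG A) : IsSimpleG (Function.swap A) := fun i j => h j i

lemma IsSimpleG.card_nbrs (hs : IsSimpleG A) (i : Fin n) : #(nbrs A i) = ∑ j, A i j := by
  rw [nbrs, card_filter]
  exact sum_congr rfl fun j _ => by have := hs i j; split <;> omega

lemma card_nbrs (hreg : IsReg n d A) (hs : IsSimpleG A) (i : Fin n) : #(nbrs A i) = d :=
  (hs.card_nbrs i).trans (hreg.1 i)

lemma card_edges (hreg : IsReg n d A) (hs : IsSimpleG A) : #(edges A) = n * d := by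
  have : #(edges A) = ∑ i, #(nbrs A i) := by
    simp only [edges, nbrs, card_filter, Fintype.sum_prod_type]
  simp [this, card_nbrs hreg hs]

end Degrees

/-- The switching `⟨i, i', j, j'⟩` is encoded as `((i, j), (i', j'))`: it replaces the edges
`(i, j)` and `(i', j')` by `(i, j')` and `(i', j)`. -/
abbrev Quad (n : ℕ) := (Fin n × Fin n) × (Fin n × Fin n)

section Switchings

variable {n d : ℕ} {A : Fin n → Fin n → ℕ}

def switchChoices (A : Fin n → Fin n → ℕ) (e : Fin n × Fin n) : Finset (Fin n × Fin n) :=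
  (nbrs (Function.swap A) e.2).erase e.1 ×ˢ (nbrs A e.1).erase e.2

def switchings (A : Fin n → Fin n → ℕ) (E : Finset (Fin n × Fin n)) : Finset (Quad n) :=
  univ.filter fun q => q.1 ∈ E ∧ q.2 ∈ switchChoices A q.1

lemma mem_switchings {E : Finset (Fin n × Fin n)} {q : Quad n} :
    q ∈ switchings A E ↔ q.1 ∈ E ∧ (q.2.1 ≠ q.1.1 ∧ 0 < A q.2.1 q.1.2) ∧
      (q.2.2 ≠ q.1.2 ∧ 0 < A q.1.1 q.2.2) := by
  simp [switchings, switchChoices, nbrs]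

lemma switchings_mono {E F : Finset (Fin n × Fin n)} (h : E ⊆ F) :
    switchings A E ⊆ switchings A F :=
  fun _ hq => mem_switchings.2 ⟨h (mem_switchings.1 hq).1, (mem_switchings.1 hq).2⟩

lemma card_switchChoices (hreg : IsReg n d A) (hs : IsSimpleG A) {e : Fin n × Fin n}
    (he : e ∈ edges A) : #(switchChoices A e) = (d - 1) * (d - 1) := by
  have he : 0 < A e.1 e.2 := (mem_filter.1 he).2
  rw [switchChoices, card_product, card_erase_of_mem (by simpa using he),
    card_erase_of_mem (mem_nbrs.2 he), card_nbrs hreg.swap hs.swap, card_nbrs hreg hs]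

lemma card_switchings (E : Finset (Fin n × Fin n)) :
    #(switchings A E) = ∑ e ∈ E, #(switchChoices A e) := by
  rw [card_eq_sum_card_fiberwise (f := Prod.fst) fun q hq => (mem_filter.1 hq).2.1]
  refine sum_congr rfl fun e he => card_nbij' Prod.snd (Prod.mk e) ?_ ?_ ?_ ?_
  · intro q hq
    simp only [coe_filter, switchings, mem_filter, mem_univ, true_and] at hq
    exact hq.2 ▸ hq.1.2
  · intro p hp
    simp_all [switchings]
  · intro q hq
    simp only [coe_filter] at hq
    exact Prod.ext hq.2.symm rfl
  · intro p _
    rfl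

/-- Edges `(i, j)` lying in a 4-cycle `i ~ j ~ k ~ j' ~ i`: these are counted by `Zae`. -/
def badEdges (A : Fin n → Fin n → ℕ) : Finset (Fin n × Fin n) :=
  univ.filter fun p : Fin n × Fin n =>
    0 < A p.1 p.2 ∧ ∃ k, k ≠ p.1 ∧ 0 < A k p.2 ∧
      2 ≤ (univ.filter fun j => 0 < A p.1 j ∧ 0 < A k j).card

def goodEdges (A : Fin n → Fin n → ℕ) : Finset (Fin n × Fin n) := edges A \ badEdges A

lemma badEdges_subset_edges : badEdges A ⊆ edges A :=
  fun e he => mem_filter.2 ⟨mem_univ e, (mem_filter.1 he).2.1⟩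

lemma card_goodEdges (hreg : IsReg n d A) (hs : IsSimpleG A) :
    #(goodEdges A) = n * d - Zae A := by
  rw [goodEdges, card_sdiff_of_subset badEdges_subset_edges, card_edges hreg hs]
  rfl

lemma card_switchings_goodEdges (hreg : IsReg n d A) (hs : IsSimpleG A) :
    #(switchings A (goodEdges A)) = (n * d - Zae A) * ((d - 1) * (d - 1)) := by
  have hcard : ∀ e ∈ goodEdges A, #(switchChoices A e) = (d - 1) * (d - 1) :=
    fun e he => card_switchChoices hreg hs (mem_sdiff.1 he).1
  rw [card_switchings, sum_const_nat hcard, card_goodEdges hreg hs]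

/-- A good switching never creates a multiple edge at `(i', j')`: otherwise `j` and `j'` would
be two common neighbours of `i` and `i'`, making `(i, j)` a bad edge. -/
lemma apply_snd_eq_zero {q : Quad n} (hq : q ∈ switchings A (goodEdges A)) :
    A q.2.1 q.2.2 = 0 := by
  obtain ⟨he, ⟨hi', hi'j⟩, hj', hij'⟩ := mem_switchings.1 hq
  obtain ⟨he, hbad⟩ := mem_sdiff.1 he
  by_contra h
  refine hbad (mem_filter.2 ⟨mem_univ _, (mem_filter.1 he).2, q.2.1, hi', hi'j, ?_⟩)
  calc 2 = #{q.1.2, q.2.2} := (card_pair hj'.symm).symm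
    _ ≤ _ := card_le_card fun j hj => by
      rcases mem_insert.1 hj with rfl | hj
      · exact mem_filter.2 ⟨mem_univ _, (mem_filter.1 he).2, hi'j⟩
      · rw [mem_singleton.1 hj]; exact mem_filter.2 ⟨mem_univ _, hij', Nat.pos_of_ne_zero h⟩

end Switchings

section Blocking

variable {n d : ℕ} {A : Fin n → Fin n → ℕ}

lemma card_nbrs_erase (hreg : IsReg n d A) (hs : IsSimpleG A) {i j : Fin n} (h : 0 < A i j) :
    #((nbrs A i).erase j) ≤ d - 1 := by
  rw [card_erase_of_mem (mem_nbrs.2 h), card_nbrs hreg hs]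

lemma card_filter_fst_fst_le (hreg : IsReg n d A) (hs : IsSimpleG A) (v : Fin n) :
    #((switchings A (edges A)).filter fun r => v = r.1.1) ≤ d * ((d - 1) * (d - 1)) := by
  refine card_le_mul_mul_of_forall_exists (X := nbrs A v) (Y := fun a => (nbrs A v).erase a)
    (Z := fun a _ => (nbrs (Function.swap A) a).erase v) (g := fun a b c => ((v, a), (c, b)))
    (card_nbrs hreg hs v).le (fun a ha => card_nbrs_erase hreg hs (mem_nbrs.1 ha))
    (fun a ha _ _ => card_nbrs_erase (i := a) (j := v) hreg.swap hs.swap (by simpa using ha))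
    fun r hr => ?_
  obtain ⟨hrs, rfl⟩ := mem_filter.1 hr
  obtain ⟨he, ⟨hi', hi'j⟩, hj', hij'⟩ := mem_switchings.1 hrs
  exact ⟨r.1.2, by simpa using (mem_filter.1 he).2, r.2.2, by simp [hj', hij'], r.2.1,
    by simp [hi', hi'j], rfl⟩

lemma card_filter_snd_fst_le (hreg : IsReg n d A) (hs : IsSimpleG A) (v : Fin n) :
    #((switchings A (edges A)).filter fun r => v = r.2.1) ≤ d * ((d - 1) * (d - 1)) := by
  refine card_le_mul_mul_of_forall_exists (X := nbrs A v)
    (Y := fun a => (nbrs (Function.swap A) a).erase v) (Z := fun a b => (nbrs A b).erase a)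
    (g := fun a b c => ((b, a), (v, c))) (card_nbrs hreg hs v).le
    (fun a ha => card_nbrs_erase (i := a) (j := v) hreg.swap hs.swap (by simpa using ha))
    (fun a _ b hb => card_nbrs_erase hreg hs (by simpa using (mem_erase.1 hb).2)) fun r hr => ?_
  obtain ⟨hrs, rfl⟩ := mem_filter.1 hr
  obtain ⟨he, ⟨hi', hi'j⟩, hj', hij'⟩ := mem_switchings.1 hrs
  exact ⟨r.1.2, by simpa using hi'j, r.1.1, by simpa [hi'.symm] using (mem_filter.1 he).2, r.2.2,
    by simp [hj', hij'], rfl⟩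

lemma card_filter_fst_snd_le (hreg : IsReg n d A) (hs : IsSimpleG A) (w : Fin n) :
    #((switchings A (edges A)).filter fun r => w = r.1.2) ≤ d * ((d - 1) * (d - 1)) := by
  refine card_le_mul_mul_of_forall_exists (X := nbrs (Function.swap A) w)
    (Y := fun a => (nbrs (Function.swap A) w).erase a) (Z := fun a _ => (nbrs A a).erase w)
    (g := fun a b c => ((a, w), (b, c))) (card_nbrs hreg.swap hs.swap w).le
    (fun a ha => card_nbrs_erase hreg.swap hs.swap (by simpa using ha))
    (fun a ha _ _ => card_nbrs_erase (i := a) (j := w) hreg hs (by simpa using ha)) fun r hr => ?_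
  obtain ⟨hrs, rfl⟩ := mem_filter.1 hr
  obtain ⟨he, ⟨hi', hi'j⟩, hj', hij'⟩ := mem_switchings.1 hrs
  exact ⟨r.1.1, by simpa using (mem_filter.1 he).2, r.2.1, by simp [hi', hi'j], r.2.2,
    by simp [hj', hij'], rfl⟩

lemma card_filter_snd_snd_le (hreg : IsReg n d A) (hs : IsSimpleG A) (w : Fin n) :
    #((switchings A (edges A)).filter fun r => w = r.2.2) ≤ d * ((d - 1) * (d - 1)) := by
  refine card_le_mul_mul_of_forall_exists (X := nbrs (Function.swap A) w)
    (Y := fun a => (nbrs A a).erase w) (Z := fun a b => (nbrs (Function.swap A) b).erase a)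
    (g := fun a b c => ((a, b), (c, w))) (card_nbrs hreg.swap hs.swap w).le
    (fun a ha => card_nbrs_erase (i := a) (j := w) hreg hs (by simpa using ha))
    (fun a _ b hb => card_nbrs_erase hreg.swap hs.swap (by simpa using (mem_erase.1 hb).2))
    fun r hr => ?_
  obtain ⟨hrs, rfl⟩ := mem_filter.1 hr
  obtain ⟨he, ⟨hi', hi'j⟩, hj', hij'⟩ := mem_switchings.1 hrs
  exact ⟨r.1.1, by simpa using hij', r.1.2, by simpa [hj'.symm] using (mem_filter.1 he).2, r.2.1,
    by simp [hi', hi'j], rfl⟩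

def leftVerts (q : Quad n) : Finset (Fin n) := {q.1.1, q.2.1}

def rightVerts (q : Quad n) : Finset (Fin n) := {q.1.2, q.2.2}

def VertexDisjoint (q r : Quad n) : Prop :=
  Disjoint (leftVerts q) (leftVerts r) ∧ Disjoint (rightVerts q) (rightVerts r)

lemma vertexDisjoint_iff {q r : Quad n} : VertexDisjoint q r ↔
    (q.1.1 ≠ r.1.1 ∧ q.1.1 ≠ r.2.1 ∧ q.2.1 ≠ r.1.1 ∧ q.2.1 ≠ r.2.1) ∧
      (q.1.2 ≠ r.1.2 ∧ q.1.2 ≠ r.2.2 ∧ q.2.2 ≠ r.1.2 ∧ q.2.2 ≠ r.2.2) := by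
  simp only [VertexDisjoint, leftVerts, rightVerts, disjoint_insert_left, disjoint_insert_right,
    disjoint_singleton_left, mem_insert, mem_singleton]
  grind

instance : DecidableRel (VertexDisjoint (n := n)) :=
  fun _ _ => inferInstanceAs (Decidable (_ ∧ _))

instance : Std.Symm (VertexDisjoint (n := n)) := ⟨fun _ _ h => ⟨h.1.symm, h.2.symm⟩⟩

instance : Std.Irrefl (VertexDisjoint (n := n)) :=
  ⟨fun _ h => by simp [VertexDisjoint, leftVerts] at h⟩

lemma card_filter_mem_leftVerts_le (hreg : IsReg n d A) (hs : IsSimpleG A) (v : Fin n) :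
    #((switchings A (edges A)).filter fun r => v ∈ leftVerts r) ≤
      2 * (d * ((d - 1) * (d - 1))) := by
  simp only [leftVerts, mem_insert, mem_singleton, filter_or]
  exact (card_union_le _ _).trans (by
    linarith [card_filter_fst_fst_le hreg hs v, card_filter_snd_fst_le hreg hs v])

lemma card_filter_mem_rightVerts_le (hreg : IsReg n d A) (hs : IsSimpleG A) (w : Fin n) :
    #((switchings A (edges A)).filter fun r => w ∈ rightVerts r) ≤
      2 * (d * ((d - 1) * (d - 1))) := by
  simp only [rightVerts, mem_insert, mem_singleton, filter_or]
  exact (card_union_le _ _).trans (by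
    linarith [card_filter_fst_snd_le hreg hs w, card_filter_snd_snd_le hreg hs w])

lemma card_filter_not_vertexDisjoint_le (hreg : IsReg n d A) (hs : IsSimpleG A) (q : Quad n) :
    #((switchings A (edges A)).filter fun r => ¬ VertexDisjoint q r) ≤
      8 * (d * ((d - 1) * (d - 1))) := by
  set s := switchings A (edges A)
  have hsub : s.filter (¬ VertexDisjoint q ·) ⊆
      (leftVerts q).biUnion (fun v => s.filter (v ∈ leftVerts ·)) ∪
        (rightVerts q).biUnion (fun w => s.filter (w ∈ rightVerts ·)) := by
    intro r hr
    obtain ⟨hrs, hqr⟩ := mem_filter.1 hr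
    simp only [VertexDisjoint, not_and_or, not_disjoint_iff] at hqr
    rcases hqr with ⟨v, hq, hr⟩ | ⟨w, hq, hr⟩
    · exact mem_union_left _ (mem_biUnion.2 ⟨v, hq, mem_filter.2 ⟨hrs, hr⟩⟩)
    · exact mem_union_right _ (mem_biUnion.2 ⟨w, hq, mem_filter.2 ⟨hrs, hr⟩⟩)
  have hl := (card_biUnion_le_card_mul (leftVerts q) (fun v => s.filter (v ∈ leftVerts ·)) _
    fun v _ => card_filter_mem_leftVerts_le hreg hs v).trans (Nat.mul_le_mul_right _ card_le_two)
  have hr := (card_biUnion_le_card_mul (rightVerts q) (fun w => s.filter (w ∈ rightVerts ·)) _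
    fun w _ => card_filter_mem_rightVerts_le hreg hs w).trans (Nat.mul_le_mul_right _ card_le_two)
  refine (card_le_card hsub).trans ((card_union_le _ _).trans ?_)
  omega

end Blocking

section Families

variable {n d : ℕ} {S : Finset (Quad n)}

def removed (S : Finset (Quad n)) (a b : Fin n) : ℕ :=
  #(S.filter fun q => (a = q.1.1 ∧ b = q.1.2) ∨ (a = q.2.1 ∧ b = q.2.2))

def added (S : Finset (Quad n)) (a b : Fin n) : ℕ :=
  #(S.filter fun q => (a = q.1.1 ∧ b = q.2.2) ∨ (a = q.2.1 ∧ b = q.1.2))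

/-- The multigraph that the switchings of `S` turn into `A`. -/
def unswitch (A : Fin n → Fin n → ℕ) (S : Finset (Quad n)) : Fin n → Fin n → ℕ :=
  fun a b => A a b + removed S a b - added S a b

lemma removed_fst_pos {q : Quad n} (hq : q ∈ S) : 0 < removed S q.1.1 q.1.2 :=
  card_pos.2 ⟨q, mem_filter.2 ⟨hq, Or.inl ⟨rfl, rfl⟩⟩⟩

lemma removed_snd_pos {q : Quad n} (hq : q ∈ S) : 0 < removed S q.2.1 q.2.2 :=
  card_pos.2 ⟨q, mem_filter.2 ⟨hq, Or.inr ⟨rfl, rfl⟩⟩⟩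

lemma added_fst_snd_pos {q : Quad n} (hq : q ∈ S) : 0 < added S q.1.1 q.2.2 :=
  card_pos.2 ⟨q, mem_filter.2 ⟨hq, Or.inl ⟨rfl, rfl⟩⟩⟩

lemma added_snd_fst_pos {q : Quad n} (hq : q ∈ S) : 0 < added S q.2.1 q.1.2 :=
  card_pos.2 ⟨q, mem_filter.2 ⟨hq, Or.inr ⟨rfl, rfl⟩⟩⟩

lemma eq_of_mem_leftVerts (hS : (S : Set (Quad n)).Pairwise VertexDisjoint) {q r : Quad n}
    (hq : q ∈ S) (hr : r ∈ S) {a : Fin n} (haq : a ∈ leftVerts q) (har : a ∈ leftVerts r) :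
    q = r := by
  by_contra hne
  exact disjoint_left.1 (hS hq hr hne).1 haq har

lemma eq_of_mem_rightVerts (hS : (S : Set (Quad n)).Pairwise VertexDisjoint) {q r : Quad n}
    (hq : q ∈ S) (hr : r ∈ S) {b : Fin n} (hbq : b ∈ rightVerts q) (hbr : b ∈ rightVerts r) :
    q = r := by
  by_contra hne
  exact disjoint_left.1 (hS hq hr hne).2 hbq hbr

lemma removed_add_added_le_one (hS : (S : Set (Quad n)).Pairwise VertexDisjoint)
    (hnd : ∀ q ∈ S, q.2.1 ≠ q.1.1 ∧ q.2.2 ≠ q.1.2) (a b : Fin n) :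
    removed S a b + added S a b ≤ 1 := by
  have hdisj : Disjoint (S.filter fun q => (a = q.1.1 ∧ b = q.1.2) ∨ (a = q.2.1 ∧ b = q.2.2))
      (S.filter fun q => (a = q.1.1 ∧ b = q.2.2) ∨ (a = q.2.1 ∧ b = q.1.2)) := by
    refine disjoint_filter.2 fun q hq h1 h2 => ?_
    have := hnd q hq
    rcases h1 with ⟨rfl, rfl⟩ | ⟨rfl, rfl⟩ <;> rcases h2 with ⟨h, h'⟩ | ⟨h, h'⟩ <;> simp_all
  rw [removed, added, ← card_union_of_disjoint hdisj, ← filter_or]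
  -- every switching counted at `(a, b)` has `a` as a left vertex
  refine card_le_one.2 fun q hq r hr => ?_
  obtain ⟨hqS, hq⟩ := mem_filter.1 hq
  obtain ⟨hrS, hr⟩ := mem_filter.1 hr
  exact eq_of_mem_leftVerts hS hqS hrS (a := a) (by simp [leftVerts]; tauto)
    (by simp [leftVerts]; tauto)

lemma snd_snd_eq_of_added_pos (hS : (S : Set (Quad n)).Pairwise VertexDisjoint)
    (hnd : ∀ q ∈ S, q.2.1 ≠ q.1.1 ∧ q.2.2 ≠ q.1.2) {r : Quad n} (hr : r ∈ S) {b : Fin n}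
    (h : 0 < added S r.1.1 b) : b = r.2.2 := by
  obtain ⟨q, hq⟩ := card_pos.1 h
  obtain ⟨hqS, hq⟩ := mem_filter.1 hq
  obtain rfl : q = r :=
    eq_of_mem_leftVerts hS hqS hr (a := r.1.1) (by simp [leftVerts]; tauto) (by simp [leftVerts])
  rcases hq with ⟨-, rfl⟩ | ⟨h1, -⟩
  · rfl
  · exact absurd h1.symm (hnd q hr).1

lemma snd_fst_eq_of_added_pos (hS : (S : Set (Quad n)).Pairwise VertexDisjoint)
    (hnd : ∀ q ∈ S, q.2.1 ≠ q.1.1 ∧ q.2.2 ≠ q.1.2) {r : Quad n} (hr : r ∈ S) {a : Fin n}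
    (h : 0 < added S a r.1.2) : a = r.2.1 := by
  obtain ⟨q, hq⟩ := card_pos.1 h
  obtain ⟨hqS, hq⟩ := mem_filter.1 hq
  obtain rfl : q = r :=
    eq_of_mem_rightVerts hS hqS hr (b := r.1.2) (by simp [rightVerts]; tauto) (by simp [rightVerts])
  rcases hq with ⟨-, h1⟩ | ⟨rfl, -⟩
  · exact absurd h1.symm (hnd q hr).2
  · rfl

/-- A switching removes and adds one edge at each of its four vertices. -/
lemma sum_removed_eq_sum_added (hnd : ∀ q ∈ S, q.2.1 ≠ q.1.1 ∧ q.2.2 ≠ q.1.2) (a b : Fin n) :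
    ∑ b', removed S a b' = ∑ b', added S a b' ∧ ∑ a', removed S a' b = ∑ a', added S a' b := by
  simp only [removed, added, card_filter]
  constructor <;> rw [sum_comm] <;> conv_rhs => rw [sum_comm]
  all_goals refine sum_congr rfl fun q hq => ?_; have := hnd q hq
  · by_cases h1 : a = q.1.1 <;> by_cases h2 : a = q.2.1 <;> simp_all
  · by_cases h1 : b = q.1.2 <;> by_cases h2 : b = q.2.2 <;> simp_all

lemma IsReg.of_add_removed_eq {A A' : Fin n → Fin n → ℕ}
    (hnd : ∀ q ∈ S, q.2.1 ≠ q.1.1 ∧ q.2.2 ≠ q.1.2)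
    (h : ∀ a b, A a b + removed S a b = A' a b + added S a b) (hA : IsReg n d A) :
    IsReg n d A' := by
  constructor
  · intro a
    have hsum := congrArg (fun F : Fin n → ℕ => ∑ b, F b) (funext (h a))
    simp only [sum_add_distrib, (sum_removed_eq_sum_added hnd a a).1, hA.1 a] at hsum
    omega
  · intro b
    have hsum := congrArg (fun F : Fin n → ℕ => ∑ a, F a) (funext fun a => h a b)
    simp only [sum_add_distrib, (sum_removed_eq_sum_added hnd b b).2, hA.2 b] at hsum
    omega

def switchingsOf (M : Finset (Fin n × Fin n)) (f : Fin n × Fin n → Fin n × Fin n) :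
    Finset (Quad n) :=
  M.image fun e => (e, f e)

lemma endpointM_eq (A' : Fin n → Fin n → ℕ) (f : Fin n × Fin n → Fin n × Fin n) (a b : Fin n) :
    endpointM A' f a b =
      A' a b + added (switchingsOf (MEs A') f) a b - removed (switchingsOf (MEs A') f) a b := by
  have hinj : Set.InjOn (fun e => (e, f e)) ↑(MEs A') := fun _ _ _ _ h => congrArg Prod.fst h
  simp only [endpointM, added, removed, switchingsOf, filter_image,
    card_image_of_injOn (hinj.mono (filter_subset _ _))]

end Families

section Upper

variable {n d k : ℕ} {A A' : Fin n → Fin n → ℕ} {f : Fin n × Fin n → Fin n × Fin n}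

lemma apply_of_mem_MEs {e : Fin n × Fin n} (he : e ∈ MEs A') : A' e.1 e.2 = 2 :=
  (mem_filter.1 he).2

lemma pairwise_switchingsOf (hc : InCat n d k A') (hf : SimplePathData A' f) :
    (switchingsOf (MEs A') f : Set (Quad n)).Pairwise VertexDisjoint := by
  simp only [switchingsOf, coe_image]
  rintro _ ⟨e, he, rfl⟩ _ ⟨e', he', rfl⟩ hne
  have hne : e ≠ e' := fun h => hne (h ▸ rfl)
  have h1 : e.1 ≠ e'.1 := fun h =>
    hne (Prod.ext h (hc.2.2.2.1 _ _ _ (apply_of_mem_MEs he) (h ▸ apply_of_mem_MEs he')))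
  have h2 : e.2 ≠ e'.2 := fun h =>
    hne (Prod.ext (hc.2.2.2.2 _ _ _ (apply_of_mem_MEs he) (h ▸ apply_of_mem_MEs he')) h)
  have hfe := (hf.1 e he).2.2.2 e' he'
  have hfe' := (hf.1 e' he').2.2.2 e he
  have hff := hf.2 e he e' he' hne
  rw [vertexDisjoint_iff]
  grind

lemma ne_of_mem_switchingsOf (hf : SimplePathData A' f) :
    ∀ q ∈ switchingsOf (MEs A') f, q.2.1 ≠ q.1.1 ∧ q.2.2 ≠ q.1.2 := by
  simp only [switchingsOf, forall_mem_image]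
  exact fun e he => (hf.1 e he).2.2.2 e he

lemma add_removed_switchingsOf (hc : InCat n d k A') (hf : SimplePathData A' f)
    (hend : A = endpointM A' f) (a b : Fin n) :
    A a b + removed (switchingsOf (MEs A') f) a b =
      A' a b + added (switchingsOf (MEs A') f) a b := by
  have hle := removed_add_added_le_one (pairwise_switchingsOf hc hf) (ne_of_mem_switchingsOf hf) a b
  have hpos : 0 < removed (switchingsOf (MEs A') f) a b → 0 < A' a b := fun h => by
    obtain ⟨q, hq⟩ := card_pos.1 h
    simp only [switchingsOf, mem_filter, mem_image] at hq
    obtain ⟨⟨e, he, rfl⟩, ⟨rfl, rfl⟩ | ⟨rfl, rfl⟩⟩ := hq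
    · rw [apply_of_mem_MEs he]; omega
    · exact (hf.1 e he).1
  rw [hend, endpointM_eq]
  omega

lemma eq_unswitch_switchingsOf (hc : InCat n d k A') (hf : SimplePathData A' f)
    (hend : A = endpointM A' f) : A' = unswitch A (switchingsOf (MEs A') f) := by
  funext a b
  have := add_removed_switchingsOf hc hf hend a b
  simp only [unswitch]
  omega

lemma mem_edges_of_mem_MEs (hc : InCat n d k A') (hf : SimplePathData A' f)
    (hend : A = endpointM A' f) {e : Fin n × Fin n} (he : e ∈ MEs A') : e ∈ edges A := by
  have hS : (e, f e) ∈ switchingsOf (MEs A') f := mem_image_of_mem _ he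
  have := add_removed_switchingsOf hc hf hend e.1 e.2
  have := removed_add_added_le_one (pairwise_switchingsOf hc hf) (ne_of_mem_switchingsOf hf) e.1 e.2
  have : 0 < removed (switchingsOf (MEs A') f) e.1 e.2 := removed_fst_pos hS
  have := apply_of_mem_MEs he
  exact mem_filter.2 ⟨mem_univ _, by omega⟩

lemma mem_switchChoices_of_mem_MEs (hc : InCat n d k A') (hf : SimplePathData A' f)
    (hend : A = endpointM A' f) {e : Fin n × Fin n} (he : e ∈ MEs A') :
    f e ∈ switchChoices A e := by
  have hS : (e, f e) ∈ switchingsOf (MEs A') f := mem_image_of_mem _ he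
  have hle := removed_add_added_le_one (pairwise_switchingsOf hc hf) (ne_of_mem_switchingsOf hf)
  have hkey := add_removed_switchingsOf hc hf hend
  have h1 : 0 < added (switchingsOf (MEs A') f) (f e).1 e.2 := added_snd_fst_pos hS
  have h2 : 0 < added (switchingsOf (MEs A') f) e.1 (f e).2 := added_fst_snd_pos hS
  have := hle (f e).1 e.2
  have := hle e.1 (f e).2
  have := hkey (f e).1 e.2
  have := hkey e.1 (f e).2
  have hne : (f e).1 ≠ e.1 ∧ (f e).2 ≠ e.2 := ne_of_mem_switchingsOf hf _ hS
  simp only [switchChoices, mem_product, mem_erase, mem_nbrs, Function.swap]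
  exact ⟨⟨hne.1, by omega⟩, hne.2, by omega⟩

theorem cat_SN_subset_image_partialChoices :
    {A' | InCat n d k A' ∧ A ∈ SN A'} ⊆
      ↑((partialChoices (edges A) (switchChoices A) k).image
        fun p => unswitch A (switchingsOf p.1 p.2)) := by
  rintro A' ⟨hc, f, hf, hend⟩
  set g := fun e => if e ∈ MEs A' then f e else e
  have hg : switchingsOf (MEs A') g = switchingsOf (MEs A') f :=
    image_congr fun e he => by simp [g, mem_coe.1 he]
  refine mem_image.2 ⟨(MEs A', g), mem_biUnion.2 ⟨MEs A', mem_powersetCard.2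
    ⟨fun e he => mem_edges_of_mem_MEs hc hf hend he, hc.2.2.1⟩, mem_product.2
    ⟨mem_singleton_self _, Fintype.mem_piFinset.2 fun e => ?_⟩⟩, ?_⟩
  · by_cases he : e ∈ MEs A'
    · simpa [g, he] using mem_switchChoices_of_mem_MEs hc hf hend he
    · simp [g, he]
  · rw [hg, ← eq_unswitch_switchingsOf hc hf hend]

theorem ncard_cat_SN_le (hreg : IsReg n d A) (hs : IsSimpleG A) :
    {A' | InCat n d k A' ∧ A ∈ SN A'}.ncard ≤ (n * d).choose k * ((d - 1) * (d - 1)) ^ k := by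
  refine (Set.ncard_le_ncard cat_SN_subset_image_partialChoices (finite_toSet _)).trans ?_
  rw [Set.ncard_coe_finset, ← card_edges hreg hs]
  exact card_image_le.trans
    (card_partialChoices_le (fun e he => (card_switchChoices hreg hs he).le) k)

end Upper

section Lower

variable {n d : ℕ} {A : Fin n → Fin n → ℕ} {S T : Finset (Quad n)}

def IsGoodFamily (A : Fin n → Fin n → ℕ) (S : Finset (Quad n)) : Prop :=
  S ⊆ switchings A (goodEdges A) ∧ (S : Set (Quad n)).Pairwise VertexDisjoint

lemma IsGoodFamily.ne (h : IsGoodFamily A S) : ∀ q ∈ S, q.2.1 ≠ q.1.1 ∧ q.2.2 ≠ q.1.2 :=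
  fun _ hq => ⟨(mem_switchings.1 (h.1 hq)).2.1.1, (mem_switchings.1 (h.1 hq)).2.2.1⟩

lemma IsGoodFamily.removed_add_added_le_one (h : IsGoodFamily A S) (a b : Fin n) :
    removed S a b + added S a b ≤ 1 :=
  _root_.removed_add_added_le_one h.2 h.ne a b

lemma IsGoodFamily.injOn_fst (h : IsGoodFamily A S) : Set.InjOn Prod.fst (S : Set (Quad n)) :=
  fun q hq r hr hqr =>
    eq_of_mem_leftVerts h.2 hq hr (a := q.1.1) (by simp [leftVerts]) (by simp [leftVerts, hqr])

lemma IsGoodFamily.apply_fst (hs : IsSimpleG A) (h : IsGoodFamily A S) {q : Quad n}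
    (hq : q ∈ S) : A q.1.1 q.1.2 = 1 := by
  have := (mem_filter.1 (mem_sdiff.1 (mem_switchings.1 (h.1 hq)).1).1).2
  have := hs q.1.1 q.1.2
  omega

lemma IsGoodFamily.apply_of_added_pos (hs : IsSimpleG A) (h : IsGoodFamily A S) {a b : Fin n}
    (hab : 0 < added S a b) : A a b = 1 := by
  obtain ⟨q, hq⟩ := card_pos.1 hab
  obtain ⟨hqS, ⟨rfl, rfl⟩ | ⟨rfl, rfl⟩⟩ := mem_filter.1 hq
  · have := (mem_switchings.1 (h.1 hqS)).2.2.2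
    have := hs q.1.1 q.2.2
    omega
  · have := (mem_switchings.1 (h.1 hqS)).2.1.2
    have := hs q.2.1 q.1.2
    omega

lemma IsGoodFamily.unswitch_add_added (hs : IsSimpleG A) (h : IsGoodFamily A S) (a b : Fin n) :
    unswitch A S a b + added S a b = A a b + removed S a b := by
  have := h.removed_add_added_le_one a b
  have := h.apply_of_added_pos hs (a := a) (b := b)
  simp only [unswitch]
  omega

lemma IsGoodFamily.unswitch_le_two (hs : IsSimpleG A) (h : IsGoodFamily A S) (a b : Fin n) :
    unswitch A S a b ≤ 2 := by
  have := h.removed_add_added_le_one a b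
  have := hs a b
  simp only [unswitch]
  omega

lemma IsGoodFamily.unswitch_fst (hs : IsSimpleG A) (h : IsGoodFamily A S) {q : Quad n}
    (hq : q ∈ S) : unswitch A S q.1.1 q.1.2 = 2 := by
  have := h.removed_add_added_le_one q.1.1 q.1.2
  have := h.unswitch_add_added hs q.1.1 q.1.2
  have := removed_fst_pos hq
  have := h.apply_fst hs hq
  omega

lemma IsGoodFamily.unswitch_snd (hs : IsSimpleG A) (h : IsGoodFamily A S) {q : Quad n}
    (hq : q ∈ S) : unswitch A S q.2.1 q.2.2 = 1 := by
  have := h.removed_add_added_le_one q.2.1 q.2.2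
  have := h.unswitch_add_added hs q.2.1 q.2.2
  have := removed_snd_pos hq
  have := apply_snd_eq_zero (h.1 hq)
  omega

lemma IsGoodFamily.unswitch_fst_snd (hs : IsSimpleG A) (h : IsGoodFamily A S) {q : Quad n}
    (hq : q ∈ S) : unswitch A S q.1.1 q.2.2 = 0 ∧ unswitch A S q.2.1 q.1.2 = 0 := by
  have := h.removed_add_added_le_one q.1.1 q.2.2
  have := h.unswitch_add_added hs q.1.1 q.2.2
  have := h.removed_add_added_le_one q.2.1 q.1.2
  have := h.unswitch_add_added hs q.2.1 q.1.2
  have := added_fst_snd_pos hq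
  have := added_snd_fst_pos hq
  have := hs q.1.1 q.2.2
  have := hs q.2.1 q.1.2
  omega

lemma IsGoodFamily.MEs_unswitch (hs : IsSimpleG A) (h : IsGoodFamily A S) :
    MEs (unswitch A S) = S.image Prod.fst := by
  ext e
  refine ⟨fun he => ?_, fun he => ?_⟩
  · have he : unswitch A S e.1 e.2 = 2 := (mem_filter.1 he).2
    have := h.removed_add_added_le_one e.1 e.2
    have := hs e.1 e.2
    have hpos : 0 < removed S e.1 e.2 := by simp only [unswitch] at he; omega
    obtain ⟨q, hq⟩ := card_pos.1 hpos
    obtain ⟨hqS, hq | hq⟩ := mem_filter.1 hq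
    · exact mem_image.2 ⟨q, hqS, Prod.ext hq.1.symm hq.2.symm⟩
    · have := h.unswitch_snd hs hqS
      rw [← hq.1, ← hq.2] at this
      omega
  · obtain ⟨q, hq, rfl⟩ := mem_image.1 he
    exact mem_filter.2 ⟨mem_univ _, h.unswitch_fst hs hq⟩

open Classical in
/-- The auxiliary edge of the switching of `S` at `e` (junk value `e` if there is none). -/
noncomputable def auxOf (S : Finset (Quad n)) (e : Fin n × Fin n) : Fin n × Fin n :=
  if h : ∃ q ∈ S, q.1 = e then (Classical.choose h).2 else e

lemma IsGoodFamily.auxOf_fst (h : IsGoodFamily A S) {q : Quad n} (hq : q ∈ S) :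
    auxOf S q.1 = q.2 := by
  have hex : ∃ r ∈ S, r.1 = q.1 := ⟨q, hq, rfl⟩
  obtain ⟨hr, hrq⟩ := Classical.choose_spec hex
  rw [auxOf, dif_pos hex, h.injOn_fst hr hq hrq]

lemma IsGoodFamily.switchingsOf_auxOf (h : IsGoodFamily A S) :
    switchingsOf (S.image Prod.fst) (auxOf S) = S := by
  rw [switchingsOf, image_image]
  exact (image_congr fun q hq => by simp [h.auxOf_fst (mem_coe.1 hq)]).trans image_id

lemma IsGoodFamily.simplePathData (hs : IsSimpleG A) (h : IsGoodFamily A S) :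
    SimplePathData (unswitch A S) (auxOf S) := by
  unfold SimplePathData
  rw [h.MEs_unswitch hs]
  simp only [forall_mem_image]
  refine ⟨fun q hq => ?_, fun q hq r hr hqr => ?_⟩
  · rw [h.auxOf_fst hq, h.unswitch_snd hs hq]
    refine ⟨one_pos, (h.unswitch_fst_snd hs hq).2, (h.unswitch_fst_snd hs hq).1, fun r hr => ?_⟩
    by_cases hqr : q = r
    · exact hqr ▸ h.ne q hq
    · have := vertexDisjoint_iff.1 (h.2 hq hr hqr)
      exact ⟨this.1.2.2.1, this.2.2.2.1⟩
  · have := vertexDisjoint_iff.1 (h.2 hq hr fun h => hqr (h ▸ rfl))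
    rw [h.auxOf_fst hq, h.auxOf_fst hr]
    exact ⟨this.1.2.2.2, this.2.2.2.2⟩

lemma IsGoodFamily.endpointM_unswitch (hs : IsSimpleG A) (h : IsGoodFamily A S) :
    endpointM (unswitch A S) (auxOf S) = A := by
  funext a b
  rw [endpointM_eq, h.MEs_unswitch hs, h.switchingsOf_auxOf]
  have := h.unswitch_add_added hs a b
  omega

lemma IsGoodFamily.inCat_unswitch (hreg : IsReg n d A) (hs : IsSimpleG A) (h : IsGoodFamily A S) :
    InCat n d #S (unswitch A S) := by
  have hMEs : ∀ {a b}, unswitch A S a b = 2 → ∃ q ∈ S, q.1 = (a, b) := fun hab =>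
    mem_image.1 (h.MEs_unswitch hs ▸ mem_filter.2 ⟨mem_univ _, hab⟩)
  refine ⟨IsReg.of_add_removed_eq h.ne (fun a b => (h.unswitch_add_added hs a b).symm) hreg,
    h.unswitch_le_two hs, ?_, fun i j j' hj hj' => ?_, fun i i' j hi hi' => ?_⟩
  · change #(MEs (unswitch A S)) = #S
    rw [h.MEs_unswitch hs, card_image_of_injOn h.injOn_fst]
  · obtain ⟨q, hq, hqe⟩ := hMEs hj
    obtain ⟨r, hr, hre⟩ := hMEs hj'
    have : q = r := eq_of_mem_leftVerts h.2 hq hr (a := i) (by simp [leftVerts, hqe])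
      (by simp [leftVerts, hre])
    subst this
    exact (Prod.ext_iff.1 (hqe.symm.trans hre)).2
  · obtain ⟨q, hq, hqe⟩ := hMEs hi
    obtain ⟨r, hr, hre⟩ := hMEs hi'
    have : q = r := eq_of_mem_rightVerts h.2 hq hr (b := j) (by simp [rightVerts, hqe])
      (by simp [rightVerts, hre])
    subst this
    exact (Prod.ext_iff.1 (hqe.symm.trans hre)).1

/-- `S` is read off from `unswitch A S`: its multiedges are the `q.1`, and `q.2` is where the
row of `q.1.1` and the column of `q.1.2` lost an edge of `A`. -/
lemma IsGoodFamily.subset_of_unswitch_eq (hs : IsSimpleG A) (hS : IsGoodFamily A S)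
    (hT : IsGoodFamily A T) (heq : unswitch A S = unswitch A T) : S ⊆ T := by
  intro q hq
  obtain ⟨r, hr, hrq⟩ : ∃ r ∈ T, r.1 = q.1 := mem_image.1 <| hT.MEs_unswitch hs ▸ heq ▸
    hS.MEs_unswitch hs ▸ mem_image_of_mem Prod.fst hq
  have hlt : ∀ {a b}, unswitch A S a b = 0 → A a b = 1 → 0 < added T a b := fun h0 h1 => by
    rw [heq] at h0
    simp only [unswitch] at h0
    omega
  obtain ⟨h0, h0'⟩ := hS.unswitch_fst_snd hs hq
  have h22 : q.2.2 = r.2.2 := snd_snd_eq_of_added_pos hT.2 hT.ne hr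
    (hrq ▸ hlt h0 (hS.apply_of_added_pos hs (added_fst_snd_pos hq)))
  have h21 : q.2.1 = r.2.1 := snd_fst_eq_of_added_pos hT.2 hT.ne hr
    (hrq ▸ hlt h0' (hS.apply_of_added_pos hs (added_snd_fst_pos hq)))
  exact Prod.ext hrq.symm (Prod.ext h21 h22) ▸ hr

theorem card_pairwiseSubsets_le_ncard_cat_SN {k : ℕ} (hreg : IsReg n d A) (hs : IsSimpleG A) :
    #(pairwiseSubsets (switchings A (goodEdges A)) VertexDisjoint k) ≤
      {A' | InCat n d k A' ∧ A ∈ SN A'}.ncard := by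
  have hgood : ∀ S ∈ pairwiseSubsets (switchings A (goodEdges A)) VertexDisjoint k,
      IsGoodFamily A S ∧ #S = k := fun S hS => by
    simp only [pairwiseSubsets, mem_filter, mem_powersetCard] at hS
    exact ⟨⟨hS.1.1, hS.2⟩, hS.1.2⟩
  rw [← Set.ncard_coe_finset]
  refine Set.ncard_le_ncard_of_injOn (unswitch A) (fun S hS => ?_) (fun S hS T hT heq => ?_)
    ((finite_toSet _).subset cat_SN_subset_image_partialChoices)
  · obtain ⟨h, rfl⟩ := hgood S hS
    exact ⟨h.inCat_unswitch hreg hs, auxOf S, h.simplePathData hs, (h.endpointM_unswitch hs).symm⟩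
  · have hS := (hgood S hS).1
    have hT := (hgood T hT).1
    exact (hS.subset_of_unswitch_eq hs hT heq).antisymm (hT.subset_of_unswitch_eq hs hS heq.symm)

end Lower

lemma sub_mul_le_mul_sub (x k d : ℕ) :
    (x - 2 * k * d ^ 3) * ((d - 1) * (d - 1)) ≤
      x * ((d - 1) * (d - 1)) - k * (8 * (d * ((d - 1) * (d - 1)))) := by
  rw [Nat.sub_mul]
  refine Nat.sub_le_sub_left ?_ _
  rcases Nat.lt_or_ge d 2 with hd | hd
  · interval_cases d <;> simp
  · have h4 : 4 * d ≤ d ^ 3 := by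
      calc 4 * d ≤ d * d * d := Nat.mul_le_mul_right d (Nat.mul_le_mul hd hd)
        _ = d ^ 3 := by ring
    nlinarith [Nat.mul_le_mul_right (k * ((d - 1) * (d - 1))) h4]

theorem stmt7_general (n d k : ℕ)
    (A : Fin n → Fin n → ℕ) (hAreg : IsReg n d A) (hAs : IsSimpleG A) :
    ((n * d - Zae A - 2 * k * d ^ 3 : ℕ) : ℝ) ^ k / (Nat.factorial k : ℝ) *
        ((d - 1 : ℕ) : ℝ) ^ (2 * k) ≤
      (({A' | InCat n d k A' ∧ A ∈ SN A'} : Set (Fin n → Fin n → ℕ)).ncard : ℝ) ∧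
    ({A' | InCat n d k A' ∧ A ∈ SN A'} : Set (Fin n → Fin n → ℕ)).ncard ≤
      Nat.choose (n * d) k * (d - 1) ^ (2 * k) := by
  have hpow : ((d - 1) * (d - 1)) ^ k = (d - 1) ^ (2 * k) := by rw [pow_mul, sq]
  have hB : ∀ q ∈ switchings A (goodEdges A),
      #((switchings A (goodEdges A)).filter fun r => ¬ VertexDisjoint q r) ≤
        8 * (d * ((d - 1) * (d - 1))) := fun q _ =>
    (card_le_card (filter_subset_filter _ (switchings_mono sdiff_subset))).trans
      (card_filter_not_vertexDisjoint_le hAreg hAs q)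
  have hlower : (n * d - Zae A - 2 * k * d ^ 3) ^ k * (d - 1) ^ (2 * k) ≤
      k ! * {A' | InCat n d k A' ∧ A ∈ SN A'}.ncard := by
    rw [← hpow, ← mul_pow]
    refine (Nat.pow_le_pow_left ?_ k).trans ((pow_le_factorial_mul_card_pairwiseSubsets hB k).trans
      (Nat.mul_le_mul_left _ (card_pairwiseSubsets_le_ncard_cat_SN hAreg hAs)))
    rw [card_switchings_goodEdges hAreg hAs]
    exact sub_mul_le_mul_sub _ k d
  refine ⟨?_, hpow ▸ ncard_cat_SN_le hAreg hAs⟩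
  rw [div_mul_eq_mul_div, div_le_iff₀ (by positivity), mul_comm _ (k ! : ℝ)]
  exact_mod_cast hlower

/-- For every simple `d`-regular bipartite graph `G` and `1 ≤ k ≤ 𝔪`,
the number of multigraphs `G' ∈ Cat_{n,d}(k)` with `G ∈ SN(G')` is at least
`(nd − Z(G) − 2kd³)^k / k! · (d−1)^{2k}` and at most `C(nd,k) · (d−1)^{2k}`. -/
theorem stmt7 (n d k : ℕ) (hd : 3 ≤ d) (hk : 1 ≤ k)
    (hm : k ≤ d ^ 2 * ⌊Real.log (n : ℝ)⌋₊)
    (A : Fin n → Fin n → ℕ) (hAreg : IsReg n d A) (hAs : IsSimpleG A) :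
    ((n * d - Zae A - 2 * k * d ^ 3 : ℕ) : ℝ) ^ k / (Nat.factorial k : ℝ) *
        ((d - 1 : ℕ) : ℝ) ^ (2 * k) ≤
      (({A' | InCat n d k A' ∧ A ∈ SN A'} : Set (Fin n → Fin n → ℕ)).ncard : ℝ) ∧
    ({A' | InCat n d k A' ∧ A ∈ SN A'} : Set (Fin n → Fin n → ℕ)).ncard ≤
      Nat.choose (n * d) k * (d - 1) ^ (2 * k) :=
  stmt7_general n d k A hAreg hAs
end

section
/- The Markov generator Q_c of the switch chain on the configuration model is reversible with respect to π_BC, and for d ≥ 2 is aperiodic in the sense that for every multigraph G, the sum of transition rates out of G satisfies Σ_{G'≠G} Q_c(G,G') ≤ (nd−d)/(nd−1) < 1. -/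
open Finset

open scoped Classical in
/-- The configuration-model probability measure `π_BC` on `d`-regular bipartite
multigraphs. -/
noncomputable def piBC (n d : ℕ) (A : Fin n → Fin n → ℕ) : ℝ :=
  if IsReg n d A then
    (Nat.factorial d : ℝ) ^ (2 * n) /
      ((Nat.factorial (n * d) : ℝ) * ∏ i, ∏ j, (Nat.factorial (A i j) : ℝ))
  else 0

open scoped Classical in
/-- Off-diagonal rates of the switch chain generator `Q_c` on the configuration model:
for `B` obtained from `A` by the switching `⟨i,i',j,j'⟩` the rate is
`mult_A(i,j)·mult_A(i',j') / (nd(nd−1)/2)` (the sum below counts each unordered switching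
twice, whence the denominator `nd(nd−1)`). -/
noncomputable def offRate (n d : ℕ) (A B : Fin n → Fin n → ℕ) : ℝ :=
  (∑ i, ∑ i', ∑ j, ∑ j',
      if i ≠ i' ∧ j ≠ j' ∧ 0 < A i j ∧ 0 < A i' j' ∧ B = switchM A i i' j j' then
        (A i j : ℝ) * (A i' j' : ℝ)
      else 0) /
    ((n * d : ℝ) * ((n * d : ℝ) - 1))

open scoped Classical in
/-- The Markov generator `Q_c` of the switch chain on the configuration model. -/
noncomputable def Qc (n d : ℕ) (A B : Fin n → Fin n → ℕ) : ℝ :=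
  if A = B then -(∑ᶠ B', offRate n d A B') else offRate n d A B

private lemma stmt8_switch_vals {n m : ℕ} (A : Fin n → Fin m → ℕ) {i i' : Fin n} {j j' : Fin m}
    (hii : i ≠ i') (hjj : j ≠ j') :
    switchM A i i' j j' i j = A i j - 1 ∧ switchM A i i' j j' i' j' = A i' j' - 1 ∧
    switchM A i i' j j' i j' = A i j' + 1 ∧ switchM A i i' j j' i' j = A i' j + 1 := by
  simp [switchM, hii, hjj, hii.symm, hjj.symm]

private lemma stmt8_switch_off {n m : ℕ} (A : Fin n → Fin m → ℕ) {i i' : Fin n} {j j' : Fin m}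
    (a : Fin n) (b : Fin m) (h1 : ¬(a = i ∧ b = j)) (h2 : ¬(a = i' ∧ b = j'))
    (h3 : ¬(a = i ∧ b = j')) (h4 : ¬(a = i' ∧ b = j)) :
    switchM A i i' j j' a b = A a b := by simp [switchM, h1, h2, h3, h4]

private lemma stmt8_switch_ne {n m : ℕ} (A : Fin n → Fin m → ℕ) {i i' : Fin n} {j j' : Fin m}
    (hii : i ≠ i') (hjj : j ≠ j') : switchM A i i' j j' ≠ A := by
  intro h
  have := congrFun (congrFun h i) j'
  simp [switchM, hii, hjj.symm] at this

private lemma stmt8_switch_switch {n m : ℕ} (A : Fin n → Fin m → ℕ) {i i' : Fin n} {j j' : Fin m}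
    (hii : i ≠ i') (hjj : j ≠ j') (h1 : 0 < A i j) (h2 : 0 < A i' j') :
    switchM (switchM A i i' j j') i i' j' j = A := by
  funext a b
  simp only [switchM]
  rcases eq_or_ne a i with ha | ha <;> rcases eq_or_ne b j with hb | hb <;>
    rcases eq_or_ne a i' with ha' | ha' <;> rcases eq_or_ne b j' with hb' | hb' <;>
    simp_all <;> omega

private lemma stmt8_cond_fwd {n : ℕ} {A B : Fin n → Fin n → ℕ} {i i' j j' : Fin n}
    (h : i ≠ i' ∧ j ≠ j' ∧ 0 < A i j ∧ 0 < A i' j' ∧ B = switchM A i i' j j') :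
    i ≠ i' ∧ j' ≠ j ∧ 0 < B i j' ∧ 0 < B i' j ∧ A = switchM B i i' j' j := by
  obtain ⟨h1, h2, h3, h4, rfl⟩ := h
  obtain ⟨v1, v2, v3, v4⟩ := stmt8_switch_vals A h1 h2
  exact ⟨h1, h2.symm, by omega, by omega, (stmt8_switch_switch A h1 h2 h3 h4).symm⟩

private lemma stmt8_cond_symm {n : ℕ} {A B : Fin n → Fin n → ℕ} {i i' j j' : Fin n} :
    (i ≠ i' ∧ j ≠ j' ∧ 0 < A i j ∧ 0 < A i' j' ∧ B = switchM A i i' j j')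
    ↔ (i ≠ i' ∧ j' ≠ j ∧ 0 < B i j' ∧ 0 < B i' j ∧ A = switchM B i i' j' j) := by
  constructor
  · exact stmt8_cond_fwd
  · intro h
    have := stmt8_cond_fwd (A := B) (B := A) (i := i) (i' := i') (j := j') (j' := j) h
    exact ⟨this.1, this.2.1, this.2.2.1, this.2.2.2.1, this.2.2.2.2⟩

private lemma stmt8_prod_fact_switch {n : ℕ} (A : Fin n → Fin n → ℕ) {i i' j j' : Fin n}
    (hii : i ≠ i') (hjj : j ≠ j') (h1 : 0 < A i j) (h2 : 0 < A i' j') :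
    (A i j * A i' j') * ∏ a, ∏ b, Nat.factorial (switchM A i i' j j' a b)
      = ((A i j' + 1) * (A i' j + 1)) * ∏ a, ∏ b, Nat.factorial (A a b) := by
  classical
  obtain ⟨v1, v2, v3, v4⟩ := stmt8_switch_vals A hii hjj
  rw [← Fintype.prod_prod_type' (f := fun a b => Nat.factorial (switchM A i i' j j' a b)),
      ← Fintype.prod_prod_type' (f := fun a b => Nat.factorial (A a b))]
  set s : Finset (Fin n × Fin n) := {(i, j), (i', j'), (i, j'), (i', j)} with hs
  have hsplit : ∀ f : Fin n × Fin n → ℕ,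
      ∏ p : Fin n × Fin n, f p = (∏ p ∈ Finset.univ \ s, f p) * ∏ p ∈ s, f p :=
    fun f => (Finset.prod_sdiff (Finset.subset_univ s)).symm
  rw [hsplit, hsplit]
  have hrest : ∏ p ∈ Finset.univ \ s, Nat.factorial (switchM A i i' j j' p.1 p.2)
      = ∏ p ∈ Finset.univ \ s, Nat.factorial (A p.1 p.2) := by
    refine Finset.prod_congr rfl fun p hp => ?_
    simp only [Finset.mem_sdiff, hs, Finset.mem_insert, Finset.mem_singleton] at hp
    push_neg at hp
    obtain ⟨-, e1, e2, e3, e4⟩ := hp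
    rw [stmt8_switch_off A p.1 p.2]
    · intro ⟨x, y⟩; exact e1 (Prod.ext x y)
    · intro ⟨x, y⟩; exact e2 (Prod.ext x y)
    · intro ⟨x, y⟩; exact e3 (Prod.ext x y)
    · intro ⟨x, y⟩; exact e4 (Prod.ext x y)
  rw [hrest]
  have hm1 : ((i, j) : Fin n × Fin n) ∉ ({(i', j'), (i, j'), (i', j)} : Finset _) := by
    simp [Prod.ext_iff, hii, hjj]
  have hm2 : ((i', j') : Fin n × Fin n) ∉ ({(i, j'), (i', j)} : Finset _) := by
    simp [Prod.ext_iff, hii.symm, hjj.symm]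
  have hm3 : ((i, j') : Fin n × Fin n) ∉ ({(i', j)} : Finset _) := by
    simp [Prod.ext_iff, hii]
  have hexp : ∀ f : Fin n × Fin n → ℕ,
      ∏ p ∈ s, f p = f (i, j) * (f (i', j') * (f (i, j') * f (i', j))) := by
    intro f
    rw [hs, Finset.prod_insert hm1, Finset.prod_insert hm2, Finset.prod_insert hm3,
      Finset.prod_singleton]
  rw [hexp, hexp]
  simp only [v1, v2, v3, v4]
  obtain ⟨x, hx⟩ := Nat.exists_eq_succ_of_ne_zero h1.ne'
  obtain ⟨y, hy⟩ := Nat.exists_eq_succ_of_ne_zero h2.ne'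
  rw [hx, hy]
  simp [Nat.factorial_succ]
  ring






private lemma stmt8_part1 (n d : ℕ) : ∀ A B : Fin n → Fin n → ℕ, IsReg n d A → IsReg n d B →
    piBC n d A * Qc n d A B = piBC n d B * Qc n d B A := by
  classical
  intro A B hA hB
  by_cases hAB : A = B
  · rw [hAB]
  · rw [Qc, if_neg hAB, Qc, if_neg (Ne.symm hAB)]
    unfold offRate
    rw [← mul_div_assoc, ← mul_div_assoc]
    congr 1
    have hswap : (∑ i, ∑ i', ∑ j, ∑ j',
        if i ≠ i' ∧ j ≠ j' ∧ 0 < B i j ∧ 0 < B i' j' ∧ A = switchM B i i' j j' then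
          (B i j : ℝ) * (B i' j' : ℝ) else 0)
        = ∑ i, ∑ i', ∑ j, ∑ j',
        if i ≠ i' ∧ j' ≠ j ∧ 0 < B i j' ∧ 0 < B i' j ∧ A = switchM B i i' j' j then
          (B i j' : ℝ) * (B i' j : ℝ) else 0 := by
      refine Finset.sum_congr rfl fun i _ => Finset.sum_congr rfl fun i' _ => ?_
      exact Finset.sum_comm
    rw [hswap]
    simp only [Finset.mul_sum]
    refine Finset.sum_congr rfl fun i _ => Finset.sum_congr rfl fun i' _ =>
      Finset.sum_congr rfl fun j _ => Finset.sum_congr rfl fun j' _ => ?_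
    by_cases hc : i ≠ i' ∧ j ≠ j' ∧ 0 < A i j ∧ 0 < A i' j' ∧ B = switchM A i i' j j'
    · rw [if_pos hc, if_pos (stmt8_cond_fwd hc)]
      obtain ⟨h1, h2, h3, h4, hB5⟩ := hc
      obtain ⟨v1, v2, v3, v4⟩ := stmt8_switch_vals A h1 h2
      rw [hB5, v3, v4]
      rw [hB5] at hB
      unfold piBC
      rw [if_pos hA, if_pos hB]
      have key : ((A i j : ℝ) * (A i' j')) *
          (∏ a, ∏ b, (Nat.factorial (switchM A i i' j j' a b) : ℝ))
          = (((A i j' : ℝ) + 1) * ((A i' j : ℝ) + 1)) *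
            (∏ a, ∏ b, (Nat.factorial (A a b) : ℝ)) := by
        have := congrArg (Nat.cast : ℕ → ℝ) (stmt8_prod_fact_switch A h1 h2 h3 h4)
        push_cast at this
        convert this using 2
      have hPA : (0:ℝ) < ∏ a, ∏ b, (Nat.factorial (A a b) : ℝ) := by
        refine Finset.prod_pos fun a _ => Finset.prod_pos fun b _ => ?_
        exact_mod_cast Nat.factorial_pos _
      have hPB : (0:ℝ) < ∏ a, ∏ b, (Nat.factorial (switchM A i i' j j' a b) : ℝ) := by
        refine Finset.prod_pos fun a _ => Finset.prod_pos fun b _ => ?_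
        exact_mod_cast Nat.factorial_pos _
      have hK : (0:ℝ) < (Nat.factorial (n * d) : ℝ) := by
        exact_mod_cast Nat.factorial_pos _
      rw [div_mul_eq_mul_div, div_mul_eq_mul_div, div_eq_div_iff (by positivity) (by positivity)]
      push_cast
      linear_combination ((Nat.factorial d : ℝ) ^ (2 * n) * (Nat.factorial (n * d) : ℝ)) * key
    · rw [if_neg hc, if_neg (fun h => hc (stmt8_cond_symm.mpr h)), mul_zero, mul_zero]

private lemma stmt8_part2 (n d : ℕ) (hn : 0 < n) (hd : 2 ≤ d) (A : Fin n → Fin n → ℕ) (hA : IsReg n d A) :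
    (∑ᶠ B ∈ {B : Fin n → Fin n → ℕ | B ≠ A}, Qc n d A B) ≤
        ((n * d : ℝ) - d) / ((n * d : ℝ) - 1) ∧
      ((n * d : ℝ) - d) / ((n * d : ℝ) - 1) < 1 := by
  classical
  have hd' : (2:ℝ) ≤ (d:ℝ) := by exact_mod_cast hd
  have hx : (2:ℝ) ≤ (n:ℝ) * d := by
    have h2 : (2:ℕ) ≤ n * d := by
      calc (2:ℕ) = 1 * 2 := by ring
        _ ≤ n * d := Nat.mul_le_mul hn hd
    exact_mod_cast h2
  constructor
  · -- main bound
    set T : Finset (Fin n → Fin n → ℕ) :=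
      Finset.image (fun q : (Fin n × Fin n) × Fin n × Fin n =>
        switchM A q.1.1 q.1.2 q.2.1 q.2.2) Finset.univ with hT
    set T' : Finset (Fin n → Fin n → ℕ) := T.filter (· ≠ A) with hT'
    have hT0 : ∀ B, B ∉ T → offRate n d A B = 0 := by
      intro B hB
      unfold offRate
      rw [div_eq_zero_iff]; left
      refine Finset.sum_eq_zero fun i _ => Finset.sum_eq_zero fun i' _ =>
        Finset.sum_eq_zero fun j _ => Finset.sum_eq_zero fun j' _ => if_neg ?_
      rintro ⟨c1, c2, c3, c4, rfl⟩
      exact hB (Finset.mem_image.mpr ⟨((i, i'), (j, j')), Finset.mem_univ _, rfl⟩)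
    have hfin : (∑ᶠ B ∈ {B : Fin n → Fin n → ℕ | B ≠ A}, Qc n d A B)
        = ∑ B ∈ T', Qc n d A B := by
      apply finsum_mem_eq_sum_of_inter_support_eq
      ext B
      simp only [Set.mem_inter_iff, Set.mem_setOf_eq, Function.mem_support,
        Finset.coe_filter, Finset.mem_coe, Finset.mem_filter, hT']
      constructor
      · rintro ⟨hne, hsup⟩
        refine ⟨⟨?_, hne⟩, hsup⟩
        by_contra hBT
        exact hsup (by rw [Qc, if_neg (Ne.symm hne)]; exact hT0 B hBT)
      · rintro ⟨⟨-, hne⟩, hsup⟩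
        exact ⟨hne, hsup⟩
    rw [hfin]
    have hQoff : ∑ B ∈ T', Qc n d A B = ∑ B ∈ T', offRate n d A B := by
      refine Finset.sum_congr rfl fun B hB => ?_
      rw [Qc, if_neg (Ne.symm (Finset.mem_filter.mp hB).2)]
    rw [hQoff]
    have hAA : offRate n d A A = 0 := by
      unfold offRate
      rw [div_eq_zero_iff]; left
      refine Finset.sum_eq_zero fun i _ => Finset.sum_eq_zero fun i' _ =>
        Finset.sum_eq_zero fun j _ => Finset.sum_eq_zero fun j' _ => if_neg ?_
      rintro ⟨c1, c2, c3, c4, c5⟩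
      exact stmt8_switch_ne A c1 c2 c5.symm
    have hTT' : ∑ B ∈ T', offRate n d A B = ∑ B ∈ T, offRate n d A B := by
      refine Finset.sum_filter_of_ne fun B _ hf => ?_
      rintro rfl
      exact hf hAA
    rw [hTT']
    unfold offRate
    rw [← Finset.sum_div]
    -- swap sums
    have hswap : (∑ B ∈ T, ∑ i, ∑ i', ∑ j, ∑ j',
        if i ≠ i' ∧ j ≠ j' ∧ 0 < A i j ∧ 0 < A i' j' ∧ B = switchM A i i' j j' then
          (A i j : ℝ) * (A i' j' : ℝ) else 0)
        = ∑ i, ∑ i', ∑ j, ∑ j', ∑ B ∈ T,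
        (if i ≠ i' ∧ j ≠ j' ∧ 0 < A i j ∧ 0 < A i' j' ∧ B = switchM A i i' j j' then
          (A i j : ℝ) * (A i' j' : ℝ) else 0) := by
      rw [Finset.sum_comm]
      refine Finset.sum_congr rfl fun i _ => ?_
      rw [Finset.sum_comm]
      refine Finset.sum_congr rfl fun i' _ => ?_
      rw [Finset.sum_comm]
      refine Finset.sum_congr rfl fun j _ => ?_
      rw [Finset.sum_comm]
    rw [hswap]
    have hinner : ∀ i i' j j' : Fin n, (∑ B ∈ T,
        if i ≠ i' ∧ j ≠ j' ∧ 0 < A i j ∧ 0 < A i' j' ∧ B = switchM A i i' j j' then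
          (A i j : ℝ) * (A i' j' : ℝ) else 0)
        = if i ≠ i' ∧ j ≠ j' ∧ 0 < A i j ∧ 0 < A i' j' then
            (A i j : ℝ) * (A i' j' : ℝ) else 0 := by
      intro i i' j j'
      by_cases hb : i ≠ i' ∧ j ≠ j' ∧ 0 < A i j ∧ 0 < A i' j'
      · rw [if_pos hb]
        obtain ⟨h1, h2, h3, h4⟩ := hb
        have heach : ∀ B, (if i ≠ i' ∧ j ≠ j' ∧ 0 < A i j ∧ 0 < A i' j' ∧
            B = switchM A i i' j j' then (A i j : ℝ) * (A i' j' : ℝ) else 0)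
            = if B = switchM A i i' j j' then (A i j : ℝ) * (A i' j' : ℝ) else 0 := by
          intro B
          by_cases hw : B = switchM A i i' j j'
          · rw [if_pos ⟨h1, h2, h3, h4, hw⟩, if_pos hw]
          · rw [if_neg (fun h => hw h.2.2.2.2), if_neg hw]
        rw [Finset.sum_congr rfl fun B _ => heach B,
          Finset.sum_ite_eq' T (switchM A i i' j j') (fun _ => (A i j : ℝ) * (A i' j' : ℝ)),
          if_pos (Finset.mem_image.mpr ⟨((i, i'), (j, j')), Finset.mem_univ _, rfl⟩)]
      · rw [if_neg hb]
        exact Finset.sum_eq_zero fun B _ =>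
          if_neg fun h => hb ⟨h.1, h.2.1, h.2.2.1, h.2.2.2.1⟩
    rw [Finset.sum_congr rfl fun i _ => Finset.sum_congr rfl fun i' _ =>
      Finset.sum_congr rfl fun j _ => Finset.sum_congr rfl fun j' _ => hinner i i' j j']
    -- bound the numerator
    have hnum : (∑ i, ∑ i', ∑ j, ∑ j',
        if i ≠ i' ∧ j ≠ j' ∧ 0 < A i j ∧ 0 < A i' j' then
          (A i j : ℝ) * (A i' j' : ℝ) else 0)
        ≤ (n:ℝ) * (((n:ℝ) - 1) * ((d:ℝ) * d)) := by
      have step1 : (∑ i, ∑ i', ∑ j, ∑ j',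
          if i ≠ i' ∧ j ≠ j' ∧ 0 < A i j ∧ 0 < A i' j' then
            (A i j : ℝ) * (A i' j' : ℝ) else 0)
          ≤ ∑ i, ∑ i', ∑ j, ∑ j',
            if i ≠ i' then (A i j : ℝ) * (A i' j' : ℝ) else 0 := by
        refine Finset.sum_le_sum fun i _ => Finset.sum_le_sum fun i' _ =>
          Finset.sum_le_sum fun j _ => Finset.sum_le_sum fun j' _ => ?_
        by_cases hb : i ≠ i' ∧ j ≠ j' ∧ 0 < A i j ∧ 0 < A i' j'
        · rw [if_pos hb, if_pos hb.1]
        · rw [if_neg hb]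
          split_ifs with h
          · positivity
          · exact le_refl 0
      refine le_trans step1 (le_of_eq ?_)
      have hrow : ∀ i : Fin n, (∑ j, (A i j : ℝ)) = d := by
        intro i; rw [← Nat.cast_sum, (hA.1 i)]
      have hjj : ∀ i i' : Fin n, (∑ j, ∑ j',
          if i ≠ i' then (A i j : ℝ) * (A i' j' : ℝ) else 0)
          = if i ≠ i' then (d:ℝ) * d else 0 := by
        intro i i'
        by_cases h : i ≠ i'
        · simp only [if_pos h]
          rw [← Finset.sum_mul_sum, hrow i, hrow i']
        · simp [h]
      rw [Finset.sum_congr rfl fun i _ => Finset.sum_congr rfl fun i' _ => hjj i i']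
      have hii : ∀ i : Fin n, (∑ i' : Fin n, if i ≠ i' then (d:ℝ) * d else 0)
          = ((n:ℝ) - 1) * ((d:ℝ) * d) := by
        intro i
        have he : ∀ i' : Fin n, (if i ≠ i' then (d:ℝ) * d else 0)
            = (d:ℝ) * d - (if i = i' then (d:ℝ) * d else 0) := by
          intro i'; by_cases h : i = i' <;> simp [h]
        rw [Finset.sum_congr rfl fun i' _ => he i', Finset.sum_sub_distrib,
          Finset.sum_ite_eq Finset.univ i (fun _ => (d:ℝ) * d), if_pos (Finset.mem_univ i),
          Finset.sum_const, Finset.card_univ, Fintype.card_fin, nsmul_eq_mul]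
        ring
      rw [Finset.sum_congr rfl fun i _ => hii i, Finset.sum_const, Finset.card_univ,
        Fintype.card_fin, nsmul_eq_mul]
    -- finish
    have hx0 : (0:ℝ) < (n:ℝ) * d := by linarith
    have hx1 : (0:ℝ) < (n:ℝ) * d - 1 := by linarith
    have hD : (0:ℝ) < ((n:ℝ) * d) * (((n:ℝ) * d) - 1) := mul_pos hx0 hx1
    have hkey : (n:ℝ) * (((n:ℝ) - 1) * ((d:ℝ) * d))
        = ((n:ℝ) * d) * (((n:ℝ) * d) - d) := by ring
    calc (∑ i, ∑ i', ∑ j, ∑ j',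
          if i ≠ i' ∧ j ≠ j' ∧ 0 < A i j ∧ 0 < A i' j' then
            (A i j : ℝ) * (A i' j' : ℝ) else 0) / (((n:ℝ) * d) * (((n:ℝ) * d) - 1))
        ≤ (((n:ℝ) * d) * (((n:ℝ) * d) - d)) / (((n:ℝ) * d) * (((n:ℝ) * d) - 1)) := by
          exact (div_le_div_iff_of_pos_right hD).mpr (by linarith)
      _ = ((n:ℝ) * d - d) / ((n:ℝ) * d - 1) := mul_div_mul_left _ _ (ne_of_gt hx0)
  · rw [div_lt_one (by linarith)]
    linarith

/-- The generator `Q_c` is reversible with respect to `π_BC`, and for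
`d ≥ 2` it is aperiodic: for every multigraph `G`,
`Σ_{G'≠G} Q_c(G,G') ≤ (nd−d)/(nd−1) < 1`. -/
theorem stmt8 (n d : ℕ) (hn : 0 < n) :
    (∀ A B : Fin n → Fin n → ℕ, IsReg n d A → IsReg n d B →
      piBC n d A * Qc n d A B = piBC n d B * Qc n d B A) ∧
    (2 ≤ d → ∀ A : Fin n → Fin n → ℕ, IsReg n d A →
      (∑ᶠ B ∈ {B : Fin n → Fin n → ℕ | B ≠ A}, Qc n d A B) ≤
          ((n * d : ℝ) - d) / ((n * d : ℝ) - 1) ∧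
        ((n * d : ℝ) - d) / ((n * d : ℝ) - 1) < 1) := by
  exact ⟨stmt8_part1 n d, fun hd A hA => stmt8_part2 n d hn hd A hA⟩
end
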